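/- arXiv:2307.02711 — 7 statements merged into one kernel-verified Lean document; each statement's English description precedes it below -/
import Mathlib

section
/- The statistics des (number of descents) and exc (number of excedances) are equidistributed over the symmetric group S_n: for every k, the number of permutations π ∈ S_n with des(π) = k equals the number of permutations with exc(π) = k. -/
namespace DMTCS

/-- The value of the permutation `π` at 0-indexed position `i`, as a natural number
(junk value 0 out of range). -/
def pval {n : ℕ} (π : Equiv.Perm (Fin n)) (i : ℕ) : ℕ :=
  if h : i < n then (π ⟨i, h⟩ : ℕ) else 0

/-- The number of descents of `π` (positions `i` with `π_i > π_{i+1}`). -/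
def desP {n : ℕ} (π : Equiv.Perm (Fin n)) : ℕ :=
  ((Finset.range (n - 1)).filter (fun i => pval π (i + 1) < pval π i)).card

/-- The number of excedances of `π` (positions `i` with `i < π_i`). -/
def excP {n : ℕ} (π : Equiv.Perm (Fin n)) : ℕ :=
  ((Finset.range n).filter (fun i => i < pval π i)).card

open Equiv Finset

variable {n : ℕ}

lemma pval_def {m : ℕ} (σ : Perm (Fin m)) {i : ℕ} (h : i < m) : pval σ i = σ ⟨i, h⟩ :=
  dif_pos h

lemma pval_lt {m : ℕ} (σ : Perm (Fin m)) {i : ℕ} (h : i < m) : pval σ i < m := by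
  rw [pval_def σ h]; exact (σ ⟨i, h⟩).isLt

lemma card_filter_fin_val {m : ℕ} (P : ℕ → Prop) [DecidablePred P] :
    ((univ : Finset (Fin m)).filter (fun q => P q.val)).card =
      ((range m).filter P).card := by
  apply Finset.card_bij (fun a _ => a.val)
  · intro a ha
    simp only [mem_filter, mem_range] at *
    exact ⟨a.isLt, ha.2⟩
  · intro a _ b _ h; exact Fin.ext h
  · intro b hb
    simp only [mem_filter, mem_range] at hb
    exact ⟨⟨b, hb.1⟩, by simp [hb.2], rfl⟩

/-- extension of a permutation of `Fin n` to `Fin (n+1)` fixing the last element -/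
def extP (u : Perm (Fin n)) : Perm (Fin (n + 1)) :=
  (finSuccEquivLast (n := n)).symm.permCongr u.optionCongr

lemma extP_castSucc (u : Perm (Fin n)) (i : Fin n) :
    extP u i.castSucc = (u i).castSucc := by
  simp [extP, Equiv.permCongr_apply]

lemma extP_last (u : Perm (Fin n)) : extP u (Fin.last n) = Fin.last n := by
  simp [extP, Equiv.permCongr_apply]

lemma extP_injective : Function.Injective (extP (n := n)) := by
  intro u v h
  ext i
  have := congrArg (fun σ : Perm (Fin (n+1)) => σ i.castSucc) h
  exact congrArg Fin.val (by simpa [extP_castSucc, Fin.castSucc_inj] using this)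

lemma pval_extP (u : Perm (Fin n)) {i : ℕ} (hi : i < n) :
    pval (extP u) i = pval u i := by
  rw [pval_def _ (Nat.lt_succ_of_lt hi), pval_def _ hi]
  have : (⟨i, Nat.lt_succ_of_lt hi⟩ : Fin (n+1)) = (⟨i, hi⟩ : Fin n).castSucc := rfl
  rw [this, extP_castSucc]
  rfl

lemma pval_extP_last (u : Perm (Fin n)) : pval (extP u) n = n := by
  rw [pval_def _ (Nat.lt_succ_self n)]
  have : (⟨n, Nat.lt_succ_self n⟩ : Fin (n+1)) = Fin.last n := rfl
  rw [this, extP_last]; rfl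


section Generic
variable {α β : Type*} [Fintype α] [Fintype β]

lemma card_filter_of_bijective {g : α → β} (hg : Function.Bijective g)
    (p : β → Prop) [DecidablePred p] :
    ((univ : Finset β).filter p).card = ((univ : Finset α).filter (fun a => p (g a))).card := by
  symm
  apply Finset.card_bij (fun a _ => g a)
  · intro a ha; simp only [mem_filter, mem_univ, true_and] at *; exact ha
  · intro a _ b _ h; exact hg.1 h
  · intro b hb
    obtain ⟨a, rfl⟩ := hg.2 b
    simp only [mem_filter, mem_univ, true_and] at hb
    exact ⟨a, by simpa using hb, rfl⟩

end Generic

section Generic2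
variable {α : Type*} [Fintype α]
/-- generic Eulerian-recurrence counting lemma -/
lemma prod_count {m : ℕ} (s : α → ℕ) (t : α × Fin m → ℕ)
    (hc : ∀ a q, t (a, q) = s a ∨ t (a, q) = s a + 1)
    (h0 : ∀ a, ((univ : Finset (Fin m)).filter (fun q => t (a, q) = s a)).card = s a + 1)
    (k : ℕ) :
    ((univ : Finset (α × Fin m)).filter (fun x => t x = k)).card =
      (k + 1) * ((univ : Finset α).filter (fun a => s a = k)).card +
      (m - k) * ((univ : Finset α).filter (fun a => s a + 1 = k)).card := by
  have key : ∀ a : α, ((univ : Finset (Fin m)).filter (fun q => t (a, q) = k)).card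
      = (if s a = k then k + 1 else 0) + (if s a + 1 = k then m - k else 0) := by
    intro a
    by_cases h1 : s a = k
    · rw [if_pos h1, if_neg (by omega)]
      rw [← h1, h0 a]
    · rw [if_neg h1]
      by_cases h2 : s a + 1 = k
      · rw [if_pos h2]
        have : ((univ : Finset (Fin m)).filter (fun q => t (a, q) = k)).card
            = ((univ : Finset (Fin m)).filter (fun q => ¬ (t (a, q) = s a))).card := by
          apply Finset.card_nbij id
          · intro q hq
            simp only [mem_coe, mem_filter, mem_univ, true_and, id] at *
            omega
          · intro q hq q' hq' h; exact h
          · intro q hq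
            simp only [Set.mem_image, mem_coe, mem_filter, mem_univ, true_and, id] at *
            refine ⟨q, ?_, rfl⟩
            rcases hc a q with h | h <;> omega
        rw [this]
        have h3 := Finset.card_filter_add_card_filter_not
          (s := (univ : Finset (Fin m))) (fun q => t (a, q) = s a)
        have h4 := h0 a
        simp only [Finset.card_univ, Fintype.card_fin] at h3
        omega
      · rw [if_neg h2]
        simp only [add_zero]
        rw [Finset.card_eq_zero, Finset.filter_eq_empty_iff]
        intro q _
        rcases hc a q with h | h <;> omega
  -- now sum over a
  have expand : ((univ : Finset (α × Fin m)).filter (fun x => t x = k)).card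
      = ∑ a : α, ((univ : Finset (Fin m)).filter (fun q => t (a, q) = k)).card := by
    rw [Finset.card_filter, Fintype.sum_prod_type]
    congr 1; ext a
    rw [Finset.card_filter]
  rw [expand]
  simp only [key]
  rw [Finset.sum_add_distrib]
  congr 1
  · rw [← Finset.sum_filter, Finset.sum_const, smul_eq_mul, mul_comm]
  · rw [← Finset.sum_filter, Finset.sum_const, smul_eq_mul, mul_comm]

end Generic2

section Exc
variable {n : ℕ}

def gE (x : Perm (Fin n) × Fin (n + 1)) : Perm (Fin (n + 1)) :=
  extP x.1 * Equiv.swap x.2 (Fin.last n)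

def cE (τ : Perm (Fin n)) (q : Fin (n + 1)) : ℕ :=
  if q.val < n then (if pval τ q.val ≤ q.val then 1 else 0) else 0

lemma gE_apply_self (τ : Perm (Fin n)) (q : Fin (n + 1)) : gE (τ, q) q = Fin.last n := by
  simp only [gE, Equiv.Perm.mul_apply, Equiv.swap_apply_left]
  exact extP_last τ

lemma gE_injective : Function.Injective (gE (n := n)) := by
  rintro ⟨τ, q⟩ ⟨τ', q'⟩ h
  have h1 : gE (τ, q) q = Fin.last n := gE_apply_self τ q
  have h2 : gE (τ', q') q' = Fin.last n := gE_apply_self τ' q'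
  rw [h] at h1
  have hq : q = q' := (gE (τ', q')).injective (h1.trans h2.symm)
  subst hq
  have h3 : extP τ = extP τ' := mul_right_cancel h
  rw [extP_injective h3]

lemma pval_gE_self (τ : Perm (Fin n)) (q : Fin (n + 1)) :
    pval (gE (τ, q)) q.val = n := by
  rw [pval_def _ q.isLt, Fin.eta, gE_apply_self]
  rfl

lemma pval_gE_of (τ : Perm (Fin n)) (q : Fin (n + 1)) {i : ℕ} (hi : i < n)
    (hne : i ≠ q.val) : pval (gE (τ, q)) i = pval τ i := by
  rw [pval_def _ (Nat.lt_succ_of_lt hi), pval_def _ hi]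
  show ((extP τ) (Equiv.swap q (Fin.last n) ⟨i, _⟩) : ℕ) = _
  rw [Equiv.swap_apply_of_ne_of_ne (by simp [Fin.ext_iff, hne])
    (by simp [Fin.ext_iff]; omega)]
  have : (⟨i, Nat.lt_succ_of_lt hi⟩ : Fin (n+1)) = (⟨i, hi⟩ : Fin n).castSucc := rfl
  rw [this, extP_castSucc]
  rfl

lemma pval_gE_last (τ : Perm (Fin n)) (q : Fin (n + 1)) (h : q.val < n) :
    pval (gE (τ, q)) n = pval τ q.val := by
  rw [pval_def _ (Nat.lt_succ_self n), pval_def _ h]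
  show ((extP τ) (Equiv.swap q (Fin.last n) ⟨n, _⟩) : ℕ) = _
  have hlast : (⟨n, Nat.lt_succ_self n⟩ : Fin (n+1)) = Fin.last n := rfl
  rw [hlast, Equiv.swap_apply_right]
  conv_lhs => rw [show q = (⟨q.val, h⟩ : Fin n).castSucc from Fin.ext rfl, extP_castSucc]
  rfl

lemma excP_gE (τ : Perm (Fin n)) (q : Fin (n + 1)) :
    excP (gE (τ, q)) = excP τ + cE τ q := by
  have hstep : ((Finset.range (n+1)).filter (fun i => i < pval (gE (τ, q)) i))
      = (Finset.range n).filter (fun i => i < pval (gE (τ, q)) i) := by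
    rw [Finset.range_add_one, Finset.filter_insert, if_neg]
    have := pval_lt (gE (τ, q)) (Nat.lt_succ_self n)
    omega
  by_cases h : q.val < n
  · have hset : (Finset.range n).filter (fun i => i < pval (gE (τ, q)) i)
        = insert q.val (((Finset.range n).filter (fun i => i < pval τ i)).erase q.val) := by
      ext x
      simp only [Finset.mem_filter, Finset.mem_range, Finset.mem_insert, Finset.mem_erase]
      constructor
      · rintro ⟨hx, hlt⟩
        by_cases hxq : x = q.val
        · exact Or.inl hxq
        · right; rw [pval_gE_of τ q hx hxq] at hlt; exact ⟨hxq, hx, hlt⟩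
      · rintro (rfl | ⟨hxq, hx, hlt⟩)
        · refine ⟨h, ?_⟩
          rw [pval_gE_self]; omega
        · rw [← pval_gE_of τ q hx hxq] at hlt; exact ⟨hx, hlt⟩
    unfold excP
    rw [hstep, hset, Finset.card_insert_of_notMem (by simp), cE, if_pos h]
    by_cases hm : q.val ∈ (Finset.range n).filter (fun i => i < pval τ i)
    · have hc : ¬ pval τ q.val ≤ q.val := by
        simp only [Finset.mem_filter, Finset.mem_range] at hm; omega
      rw [if_neg hc, Finset.card_erase_of_mem hm]
      have : 0 < ((Finset.range n).filter (fun i => i < pval τ i)).card :=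
        Finset.card_pos.mpr ⟨q.val, hm⟩
      omega
    · have hc : pval τ q.val ≤ q.val := by
        simp only [Finset.mem_filter, Finset.mem_range] at hm
        omega
      rw [if_pos hc, Finset.erase_eq_of_notMem hm]
  · -- q = last
    have hcE : cE τ q = 0 := by rw [cE, if_neg h]
    unfold excP
    rw [hstep, hcE, add_zero]
    congr 1
    apply Finset.filter_congr
    intro x hx
    rw [Finset.mem_range] at hx
    rw [pval_gE_of τ q hx (by omega)]

lemma count_cE (τ : Perm (Fin n)) :
    ((Finset.univ : Finset (Fin (n+1))).filter (fun q => cE τ q = 0)).card = excP τ + 1 := by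
  have hiff : ∀ q : Fin (n+1), (cE τ q = 0) ↔ ((fun x => x < n → x < pval τ x) q.val) := by
    intro q
    unfold cE
    by_cases h : q.val < n
    · rw [if_pos h]
      constructor
      · intro h1 _
        by_contra hc
        rw [if_pos (by omega)] at h1; omega
      · intro h1
        rw [if_neg (by have := h1 h; omega)]
    · rw [if_neg h]; exact ⟨fun _ hx => absurd hx h, fun _ => rfl⟩
  have : ((Finset.univ : Finset (Fin (n+1))).filter (fun q => cE τ q = 0)).card
      = ((Finset.univ : Finset (Fin (n+1))).filter (fun q => (fun x => x < n → x < pval τ x) q.val)).card := by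
    congr 1
    apply Finset.filter_congr
    intro q _
    simp only [hiff q]
  rw [this, card_filter_fin_val (fun x => x < n → x < pval τ x)]
  have hset : (Finset.range (n+1)).filter (fun x => x < n → x < pval τ x)
      = insert n ((Finset.range n).filter (fun x => x < pval τ x)) := by
    ext x
    simp only [Finset.mem_filter, Finset.mem_range, Finset.mem_insert]
    constructor
    · rintro ⟨hx, hP⟩
      by_cases hxn : x = n
      · exact Or.inl hxn
      · right; have hxlt : x < n := by omega
        exact ⟨hxlt, hP hxlt⟩
    · rintro (h' | ⟨hx, hlt⟩)
      · exact ⟨by omega, fun hc => by omega⟩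
      · exact ⟨by omega, fun _ => hlt⟩
  rw [hset, Finset.card_insert_of_notMem (by simp)]
  unfold excP
  omega

end Exc

section Des
variable {n : ℕ}

def fq (q : Fin (n + 1)) : Perm (Fin (n + 1)) :=
  Fin.revPerm * (q.rev).cycleRange * Fin.revPerm

lemma fq_apply (q j : Fin (n + 1)) : fq q j = ((q.rev).cycleRange j.rev).rev := by
  simp [fq, Equiv.Perm.mul_apply]

lemma fq_self (q : Fin (n + 1)) : fq q q = Fin.last n := by
  rw [fq_apply, Fin.cycleRange_self, Fin.rev_zero]

lemma fq_lt {q j : Fin (n + 1)} (h : j < q) : fq q j = j := by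
  rw [fq_apply, Fin.cycleRange_of_gt (Fin.rev_lt_rev.mpr h), Fin.rev_rev]

lemma fq_gt {q j : Fin (n + 1)} (h : q < j) : ((fq q j : Fin (n + 1)) : ℕ) = (j : ℕ) - 1 := by
  rw [fq_apply, Fin.cycleRange_of_lt (Fin.rev_lt_rev.mpr h)]
  have hrev : j.rev < Fin.last n := by
    have h2 : j.rev < q.rev := Fin.rev_lt_rev.mpr h
    have h3 : q.rev ≤ Fin.last n := Fin.le_last _
    exact lt_of_lt_of_le h2 h3
  rw [Fin.val_rev, Fin.val_add_one_of_lt hrev, Fin.val_rev]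
  have hj : (j : ℕ) ≤ n := Nat.lt_succ_iff.mp j.isLt
  have hq : (q : ℕ) < (j : ℕ) := h
  omega

def gD (x : Perm (Fin n) × Fin (n + 1)) : Perm (Fin (n + 1)) := extP x.1 * fq x.2

def cD (u : Perm (Fin n)) (q : Fin (n + 1)) : ℕ :=
  if q.val < n then (if 0 < q.val ∧ pval u q.val < pval u (q.val - 1) then 0 else 1) else 0

lemma gD_apply_self (u : Perm (Fin n)) (q : Fin (n + 1)) : gD (u, q) q = Fin.last n := by
  simp only [gD, Equiv.Perm.mul_apply, fq_self]
  exact extP_last u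

lemma gD_injective : Function.Injective (gD (n := n)) := by
  rintro ⟨u, q⟩ ⟨u', q'⟩ h
  have h1 : gD (u, q) q = Fin.last n := gD_apply_self u q
  have h2 : gD (u', q') q' = Fin.last n := gD_apply_self u' q'
  rw [h] at h1
  have hq : q = q' := (gD (u', q')).injective (h1.trans h2.symm)
  subst hq
  have h3 : extP u = extP u' := mul_right_cancel h
  rw [extP_injective h3]

lemma pval_gD_self (u : Perm (Fin n)) (q : Fin (n + 1)) :
    pval (gD (u, q)) q.val = n := by
  rw [pval_def _ q.isLt, Fin.eta, gD_apply_self]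
  rfl

lemma pval_gD_lt (u : Perm (Fin n)) (q : Fin (n + 1)) {i : ℕ} (hi : i < q.val) :
    pval (gD (u, q)) i = pval u i := by
  have hin : i < n := by
    have := Nat.lt_succ_iff.mp q.isLt; omega
  rw [pval_def _ (Nat.lt_succ_of_lt hin), pval_def _ hin]
  show ((extP u) (fq q ⟨i, _⟩) : ℕ) = _
  rw [fq_lt (show (⟨i, Nat.lt_succ_of_lt hin⟩ : Fin (n+1)) < q from hi)]
  conv_lhs => rw [show (⟨i, Nat.lt_succ_of_lt hin⟩ : Fin (n+1)) = (⟨i, hin⟩ : Fin n).castSucc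
    from Fin.ext rfl, extP_castSucc]
  rfl

lemma pval_gD_gt (u : Perm (Fin n)) (q : Fin (n + 1)) {i : ℕ} (hq : q.val < i)
    (hi : i < n + 1) : pval (gD (u, q)) i = pval u (i - 1) := by
  have hi1 : i - 1 < n := by omega
  rw [pval_def _ hi, pval_def _ hi1]
  show ((extP u) (fq q ⟨i, hi⟩) : ℕ) = _
  have hval : ((fq q ⟨i, hi⟩ : Fin (n+1)) : ℕ) = i - 1 :=
    fq_gt (show q < (⟨i, hi⟩ : Fin (n+1)) from hq)
  have : fq q ⟨i, hi⟩ = (⟨i - 1, hi1⟩ : Fin n).castSucc := by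
    apply Fin.ext
    rw [hval]
    rfl
  rw [this, extP_castSucc]
  rfl

lemma desP_gD (u : Perm (Fin n)) (q : Fin (n + 1)) :
    desP (gD (u, q)) = desP u + cD u q := by
  set σ := gD (u, q) with hσ
  have hQ : q.val ≤ n := Nat.lt_succ_iff.mp q.isLt
  have hdes : desP σ = ((Finset.range n).filter
      (fun i => pval σ (i + 1) < pval σ i)).card := by
    unfold desP
    congr 1
  by_cases hqn : q.val < n
  case neg =>
    -- q.val = n : the largest value is appended at the end
    have hQn : q.val = n := by omega
    have hset : (Finset.range n).filter (fun i => pval σ (i + 1) < pval σ i)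
        = (Finset.range (n - 1)).filter (fun i => pval u (i + 1) < pval u i) := by
      ext i
      simp only [Finset.mem_filter, Finset.mem_range]
      constructor
      · rintro ⟨hi, hd⟩
        rcases Nat.lt_or_ge i (n - 1) with h1 | h1
        · rw [pval_gD_lt u q (by omega), pval_gD_lt u q (by omega)] at hd
          exact ⟨h1, hd⟩
        · exfalso
          have hieq : i = n - 1 := by omega
          have hn1 : 0 < n := by omega
          have : i + 1 = q.val := by omega
          rw [this, pval_gD_self, pval_gD_lt u q (by omega)] at hd
          have := pval_lt u (show i < n by omega)
          omega
      · rintro ⟨hi, hd⟩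
        rw [pval_gD_lt u q (by omega), pval_gD_lt u q (by omega)]
        exact ⟨by omega, hd⟩
    rw [hdes, hset, cD, if_neg hqn, add_zero]
    rfl
  case pos =>
    -- broken-descent indicator set
    set T := (Finset.range (n - 1)).filter (fun i => pval u (i + 1) < pval u i) with hT
    set φ : ℕ → ℕ := fun j => if j + 1 < q.val then j else j + 1 with hφ
    have hset : (Finset.range n).filter (fun i => pval σ (i + 1) < pval σ i)
        = insert q.val ((T.filter (fun j => j + 1 ≠ q.val)).image φ) := by
      ext i
      simp only [Finset.mem_filter, Finset.mem_range, Finset.mem_insert, Finset.mem_image,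
        hT, hφ]
      constructor
      · rintro ⟨hi, hd⟩
        rcases Nat.lt_trichotomy (i + 1) q.val with h1 | h1 | h1
        · -- i + 1 < Q
          rw [pval_gD_lt u q (by omega), pval_gD_lt u q (by omega)] at hd
          right
          exact ⟨i, ⟨⟨by omega, hd⟩, by omega⟩, by simp [h1]⟩
        · -- i + 1 = Q : impossible
          exfalso
          rw [h1, pval_gD_self, pval_gD_lt u q (by omega)] at hd
          have := pval_lt u (show i < n by omega)
          omega
        · rcases Nat.lt_or_ge q.val i with h2 | h2
          · -- i > Q
            rw [pval_gD_gt u q (by omega) (by omega), pval_gD_gt u q h2 (by omega)] at hd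
            have : i + 1 - 1 = i := by omega
            rw [this] at hd
            right
            refine ⟨i - 1, ⟨⟨by omega, ?_⟩, by omega⟩, ?_⟩
            · have : i - 1 + 1 = i := by omega
              rw [this]; exact hd
            · have hnot : ¬ (i - 1 + 1 < q.val) := by omega
              rw [if_neg hnot]; omega
          · -- i = Q
            left; omega
      · rintro (rfl | ⟨j, ⟨⟨hj, hdj⟩, hjq⟩, rfl⟩)
        · refine ⟨hqn, ?_⟩
          rw [pval_gD_self, pval_gD_gt u q (by omega) (by omega)]
          have : q.val + 1 - 1 = q.val := by omega
          rw [this]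
          exact pval_lt u hqn
        · rcases Nat.lt_or_ge (j + 1) q.val with h1 | h1
          · rw [if_pos h1]
            rw [pval_gD_lt u q (by omega), pval_gD_lt u q (by omega)]
            exact ⟨by omega, hdj⟩
          · have h1' : q.val < j + 1 := by omega
            rw [if_neg (by omega)]
            constructor
            · omega
            · rw [pval_gD_gt u q (by omega) (by omega),
                pval_gD_gt u q (by omega) (by omega)]
              have e1 : j + 1 + 1 - 1 = j + 1 := by omega
              have e2 : j + 1 - 1 = j := by omega
              rw [e1, e2]
              exact hdj
    have hQnotin : q.val ∉ (T.filter (fun j => j + 1 ≠ q.val)).image φ := by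
      simp only [Finset.mem_image, Finset.mem_filter, hφ, not_exists]
      rintro j ⟨⟨hj, hjq⟩, hje⟩
      by_cases h1 : j + 1 < q.val
      · rw [if_pos h1] at hje; omega
      · rw [if_neg h1] at hje; omega
    have hinj : Set.InjOn φ (T.filter (fun j => j + 1 ≠ q.val)) := by
      intro a ha b hb hab
      simp only [hφ] at hab
      by_cases h1 : a + 1 < q.val <;> by_cases h2 : b + 1 < q.val <;>
        simp only [if_pos, if_neg, h1, h2, if_true, if_false] at hab <;> omega
    have hbrk : T.filter (fun j => j + 1 = q.val)
        = if 0 < q.val ∧ pval u q.val < pval u (q.val - 1) then {q.val - 1} else ∅ := by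
      ext j
      simp only [Finset.mem_filter, hT, Finset.mem_range]
      by_cases hb : 0 < q.val ∧ pval u q.val < pval u (q.val - 1)
      · rw [if_pos hb]
        simp only [Finset.mem_singleton]
        constructor
        · rintro ⟨_, hj⟩; omega
        · rintro rfl
          refine ⟨⟨by omega, ?_⟩, by omega⟩
          have : q.val - 1 + 1 = q.val := by omega
          rw [this]; exact hb.2
      · rw [if_neg hb]
        simp only [Finset.notMem_empty, iff_false]
        rintro ⟨⟨hj, hdj⟩, hje⟩
        apply hb
        refine ⟨by omega, ?_⟩
        have : q.val - 1 = j := by omega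
        rw [this, show q.val = j + 1 by omega]
        exact hdj
    have hsplit : (T.filter (fun j => j + 1 ≠ q.val)).card
        + (T.filter (fun j => j + 1 = q.val)).card = T.card := by
      rw [add_comm]
      exact Finset.card_filter_add_card_filter_not (fun j => j + 1 = q.val)
    rw [hdes, hset, Finset.card_insert_of_notMem hQnotin,
      Finset.card_image_of_injOn hinj, cD, if_pos hqn]
    have hdesu : desP u = T.card := rfl
    by_cases hb : 0 < q.val ∧ pval u q.val < pval u (q.val - 1)
    · rw [if_pos hb]
      rw [if_pos hb] at hbrk
      have : (T.filter (fun j => j + 1 = q.val)).card = 1 := by rw [hbrk]; rfl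
      omega
    · rw [if_neg hb]
      rw [if_neg hb] at hbrk
      have : (T.filter (fun j => j + 1 = q.val)).card = 0 := by rw [hbrk]; rfl
      omega

lemma count_cD (u : Perm (Fin n)) :
    ((Finset.univ : Finset (Fin (n + 1))).filter (fun q => cD u q = 0)).card = desP u + 1 := by
  have hiff : ∀ q : Fin (n + 1), (cD u q = 0)
      ↔ (q.val < n → (0 < q.val ∧ pval u q.val < pval u (q.val - 1))) := by
    intro q
    unfold cD
    by_cases h : q.val < n
    · rw [if_pos h]
      by_cases hb : 0 < q.val ∧ pval u q.val < pval u (q.val - 1)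
      · rw [if_pos hb]; exact ⟨fun _ _ => hb, fun _ => rfl⟩
      · rw [if_neg hb]
        constructor
        · intro h1; omega
        · intro h1; exact absurd (h1 h) hb
    · rw [if_neg h]; exact ⟨fun _ hx => absurd hx h, fun _ => rfl⟩
  have step1 : ((Finset.univ : Finset (Fin (n + 1))).filter (fun q => cD u q = 0)).card
      = ((Finset.univ : Finset (Fin (n + 1))).filter
          (fun q => (fun x => x < n → (0 < x ∧ pval u x < pval u (x - 1))) q.val)).card := by
    congr 1
    apply Finset.filter_congr
    intro q _
    simp only [hiff q]
  rw [step1, card_filter_fin_val (fun x => x < n → (0 < x ∧ pval u x < pval u (x - 1)))]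
  have hset : (Finset.range (n + 1)).filter (fun x => x < n → (0 < x ∧ pval u x < pval u (x - 1)))
      = insert n (((Finset.range (n - 1)).filter
          (fun i => pval u (i + 1) < pval u i)).image (fun j => j + 1)) := by
    ext x
    simp only [Finset.mem_filter, Finset.mem_range, Finset.mem_insert, Finset.mem_image]
    constructor
    · rintro ⟨hx, hP⟩
      by_cases hxn : x = n
      · exact Or.inl hxn
      · right
        have hxlt : x < n := by omega
        obtain ⟨hx0, hlt⟩ := hP hxlt
        refine ⟨x - 1, ⟨by omega, ?_⟩, by omega⟩
        have : x - 1 + 1 = x := by omega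
        rw [this]; exact hlt
    · rintro (h' | ⟨j, ⟨hj, hdj⟩, rfl⟩)
      · exact ⟨by omega, fun hc => by omega⟩
      · refine ⟨by omega, fun _ => ⟨by omega, ?_⟩⟩
        have : j + 1 - 1 = j := by omega
        rw [this]; exact hdj
  rw [hset, Finset.card_insert_of_notMem (by
    simp only [Finset.mem_image, Finset.mem_filter, Finset.mem_range, not_exists]
    rintro j ⟨⟨hj, _⟩, hje⟩
    omega),
    Finset.card_image_of_injOn (fun a _ b _ h => by omega)]
  unfold desP
  omega

end Des

section Main
variable {n : ℕ}

lemma card_eq_prod :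
    Fintype.card (Perm (Fin n) × Fin (n + 1)) = Fintype.card (Perm (Fin (n + 1))) := by
  simp [Fintype.card_perm, Nat.factorial_succ, mul_comm]

lemma gE_bijective : Function.Bijective (gE (n := n)) :=
  (Fintype.bijective_iff_injective_and_card _).mpr ⟨gE_injective, card_eq_prod⟩

lemma gD_bijective : Function.Bijective (gD (n := n)) :=
  (Fintype.bijective_iff_injective_and_card _).mpr ⟨gD_injective, card_eq_prod⟩

lemma cE_le_one (τ : Perm (Fin n)) (q : Fin (n + 1)) : cE τ q ≤ 1 := by
  unfold cE; split_ifs <;> omega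

lemma cD_le_one (u : Perm (Fin n)) (q : Fin (n + 1)) : cD u q ≤ 1 := by
  unfold cD; split_ifs <;> omega

lemma exc_rec (k : ℕ) :
    ((univ : Finset (Perm (Fin (n + 1)))).filter (fun σ => excP σ = k)).card
      = (k + 1) * ((univ : Finset (Perm (Fin n))).filter (fun τ => excP τ = k)).card
        + (n + 1 - k) * ((univ : Finset (Perm (Fin n))).filter (fun τ => excP τ + 1 = k)).card := by
  rw [card_filter_of_bijective gE_bijective (fun σ => excP σ = k)]
  exact prod_count excP (fun x => excP (gE x))
    (fun τ q => by
      simp only [excP_gE]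
      have := cE_le_one τ q
      omega)
    (fun τ => by
      rw [← count_cE τ]
      congr 1
      apply Finset.filter_congr
      intro q _
      simp only [excP_gE]
      constructor
      · intro h; omega
      · intro h; omega) k

lemma des_rec (k : ℕ) :
    ((univ : Finset (Perm (Fin (n + 1)))).filter (fun σ => desP σ = k)).card
      = (k + 1) * ((univ : Finset (Perm (Fin n))).filter (fun u => desP u = k)).card
        + (n + 1 - k) * ((univ : Finset (Perm (Fin n))).filter (fun u => desP u + 1 = k)).card := by
  rw [card_filter_of_bijective gD_bijective (fun σ => desP σ = k)]
  exact prod_count desP (fun x => desP (gD x))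
    (fun u q => by
      simp only [desP_gD]
      have := cD_le_one u q
      omega)
    (fun u => by
      rw [← count_cD u]
      congr 1
      apply Finset.filter_congr
      intro q _
      simp only [desP_gD]
      constructor
      · intro h; omega
      · intro h; omega) k

end Main

/-- `des` and `exc` are equidistributed over the symmetric group `S_n`. -/
theorem stmt_2 (n k : ℕ) :
    ((Finset.univ : Finset (Equiv.Perm (Fin n))).filter (fun π => desP π = k)).card =
    ((Finset.univ : Finset (Equiv.Perm (Fin n))).filter (fun π => excP π = k)).card := by
  induction n generalizing k with
  | zero =>
    congr 1
  | succ m ih =>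
    rw [des_rec k, exc_rec k, ih k]
    congr 2
    cases k with
    | zero =>
      rw [Finset.filter_false_of_mem (fun τ _ => by omega),
        Finset.filter_false_of_mem (fun τ _ => by omega)]
    | succ j =>
      have e1 : ((univ : Finset (Perm (Fin m))).filter (fun u => desP u + 1 = j + 1))
          = ((univ : Finset (Perm (Fin m))).filter (fun u => desP u = j)) := by
        apply Finset.filter_congr
        intro u _
        constructor <;> (intro h; omega)
      have e2 : ((univ : Finset (Perm (Fin m))).filter (fun u => excP u + 1 = j + 1))
          = ((univ : Finset (Perm (Fin m))).filter (fun u => excP u = j)) := by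
        apply Finset.filter_congr
        intro u _
        constructor <;> (intro h; omega)
      rw [e1, e2, ih j]

end DMTCS
end

section
/- For each x ∈ [n], the valley-hopping map φ_x : S_n → S_n is an involution: φ_x(φ_x(π)) = π for all π ∈ S_n. -/
namespace DMTCS

def entry (l : List ℕ) (i : ℕ) : WithTop ℕ :=
  if h : 1 ≤ i ∧ i ≤ l.length then ((l.get ⟨i - 1, by omega⟩ : ℕ) : WithTop ℕ) else ⊤

/-- The valley-hopping involution `φ_x`: writing `l = w1 w2 x w4 w5` where `w2` (resp. `w4`)
is the maximal consecutive subword immediately left (resp. right) of `x` with all letters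
smaller than `x`, it sends `l` to `w1 w4 x w2 w5` when `x` is a double ascent or double
descent (equivalently, exactly one of `w2`, `w4` is nonempty), and fixes `l` otherwise. -/
def hop (x : ℕ) (l : List ℕ) : List ℕ :=
  if x ∈ l then
    let l1 := l.takeWhile (fun a => decide (a ≠ x))
    let l2 := (l.dropWhile (fun a => decide (a ≠ x))).tail
    let w2 := (l1.reverse.takeWhile (fun a => decide (a < x))).reverse
    let w1 := (l1.reverse.dropWhile (fun a => decide (a < x))).reverse
    let w4 := l2.takeWhile (fun a => decide (a < x))
    let w5 := l2.dropWhile (fun a => decide (a < x))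
    if (w2 = [] ∧ w4 ≠ []) ∨ (w2 ≠ [] ∧ w4 = []) then
      w1 ++ w4 ++ x :: w2 ++ w5
    else l
  else l

lemma takeWhile_append_all {p : ℕ → Bool} {a : List ℕ} (b : List ℕ)
    (h : ∀ y ∈ a, p y = true) : (a ++ b).takeWhile p = a ++ b.takeWhile p := by
  induction a with
  | nil => simp
  | cons z t ih =>
    simp only [List.cons_append, List.takeWhile_cons, h z (by simp), if_true]
    rw [ih (fun y hy => h y (by simp [hy]))]

lemma dropWhile_append_all {p : ℕ → Bool} {a : List ℕ} (b : List ℕ)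
    (h : ∀ y ∈ a, p y = true) : (a ++ b).dropWhile p = b.dropWhile p := by
  induction a with
  | nil => simp
  | cons z t ih =>
    simp only [List.cons_append, List.dropWhile_cons, h z (by simp), if_true]
    exact ih (fun y hy => h y (by simp [hy]))

lemma takeWhile_dropWhile_nil (p : ℕ → Bool) (l : List ℕ) :
    (l.dropWhile p).takeWhile p = [] := by
  induction l with
  | nil => simp
  | cons z t ih =>
    rw [List.dropWhile_cons]
    by_cases h : p z
    · simpa [h] using ih
    · simp [List.takeWhile_cons, h]

lemma dropWhile_of_takeWhile_nil {p : ℕ → Bool} {l : List ℕ}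
    (h : l.takeWhile p = []) : l.dropWhile p = l := by
  conv_rhs => rw [← List.takeWhile_append_dropWhile (p := p) (l := l), h]
  simp

/-- Key computation: `hop` on an explicitly decomposed list. -/
lemma hop_decomp (x : ℕ) (w1 w2 w4 w5 : List ℕ)
    (h2 : ∀ y ∈ w2, y < x) (h4 : ∀ y ∈ w4, y < x)
    (h1 : x ∉ w1)
    (hw1 : w1.reverse.takeWhile (fun a => decide (a < x)) = [])
    (hw5 : w5.takeWhile (fun a => decide (a < x)) = []) :
    hop x (w1 ++ w2 ++ x :: (w4 ++ w5)) =
      if (w2 = [] ∧ w4 ≠ []) ∨ (w2 ≠ [] ∧ w4 = []) then w1 ++ w4 ++ x :: (w2 ++ w5)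
      else w1 ++ w2 ++ x :: (w4 ++ w5) := by
  have hmem : x ∈ w1 ++ w2 ++ x :: (w4 ++ w5) := by simp
  have hne : ∀ y ∈ w1 ++ w2, (fun a => decide (a ≠ x)) y = true := by
    intro y hy
    simp only [decide_eq_true_eq]
    rcases List.mem_append.1 hy with hy | hy
    · exact fun h => h1 (h ▸ hy)
    · exact Nat.ne_of_lt (h2 y hy)
  have htake : (w1 ++ w2 ++ x :: (w4 ++ w5)).takeWhile (fun a => decide (a ≠ x)) = w1 ++ w2 := by
    rw [takeWhile_append_all _ hne, List.takeWhile_cons]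
    simp
  have hdrop : (w1 ++ w2 ++ x :: (w4 ++ w5)).dropWhile (fun a => decide (a ≠ x))
      = x :: (w4 ++ w5) := by
    rw [dropWhile_append_all _ hne, List.dropWhile_cons]
    simp
  have hw2all : ∀ y ∈ w2.reverse, (fun a => decide (a < x)) y = true := by
    intro y hy; simpa using h2 y (List.mem_reverse.1 hy)
  have htake2 : ((w1 ++ w2).reverse).takeWhile (fun a => decide (a < x)) = w2.reverse := by
    rw [List.reverse_append, takeWhile_append_all _ hw2all, hw1, List.append_nil]
  have hdrop2 : ((w1 ++ w2).reverse).dropWhile (fun a => decide (a < x)) = w1.reverse := by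
    rw [List.reverse_append, dropWhile_append_all _ hw2all, dropWhile_of_takeWhile_nil hw1]
  have hw4all : ∀ y ∈ w4, (fun a => decide (a < x)) y = true := by
    intro y hy; simpa using h4 y hy
  have htake4 : (w4 ++ w5).takeWhile (fun a => decide (a < x)) = w4 := by
    rw [takeWhile_append_all _ hw4all, hw5, List.append_nil]
  have hdrop4 : (w4 ++ w5).dropWhile (fun a => decide (a < x)) = w5 := by
    rw [dropWhile_append_all _ hw4all, dropWhile_of_takeWhile_nil hw5]
  simp only [hop, if_pos hmem, htake, hdrop, List.tail_cons, htake2, hdrop2, htake4, hdrop4,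
    List.reverse_reverse]
  split <;> simp


/-- The valley-hopping map `φ_x` is an involution on permutations of [n]. -/
theorem stmt_7 (n : ℕ) (l : List ℕ) (hl : l.Perm (List.range' 1 n)) (x : ℕ) (hx : x ∈ l) :
    hop x (hop x l) = l := by
  classical
  set p : ℕ → Bool := fun a => decide (a ≠ x) with hp
  set q : ℕ → Bool := fun a => decide (a < x) with hq
  set a := l.takeWhile p with ha
  -- the first occurrence of x
  have hdne : l.dropWhile p ≠ [] := by
    intro h
    have hxa : x ∈ l.takeWhile p := by
      have := hx
      rw [← List.takeWhile_append_dropWhile (p := p) (l := l), h, List.append_nil] at this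
      exact this
    have := List.mem_takeWhile_imp hxa
    simp [hp] at this
  set b := (l.dropWhile p).tail with hb
  have hdx : l.dropWhile p = x :: b := by
    have hh := List.head_dropWhile_not p (l := l) hdne
    have : (l.dropWhile p).head hdne = x := by
      simp only [hp, decide_eq_false_iff_not, not_not] at hh; exact hh
    rw [hb, ← this, List.cons_head_tail]
  have hlab : l = a ++ x :: b := by
    rw [ha, ← hdx, List.takeWhile_append_dropWhile]
  set w2 := (a.reverse.takeWhile q).reverse with hw2
  set w1 := (a.reverse.dropWhile q).reverse with hw1
  set w4 := b.takeWhile q with hw4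
  set w5 := b.dropWhile q with hw5
  have haw : a = w1 ++ w2 := by
    rw [hw1, hw2, ← List.reverse_append, List.takeWhile_append_dropWhile, List.reverse_reverse]
  have hbw : b = w4 ++ w5 := (List.takeWhile_append_dropWhile (p := q) (l := b)).symm
  have h2 : ∀ y ∈ w2, y < x := by
    intro y hy
    have := List.mem_takeWhile_imp (List.mem_reverse.1 hy)
    simpa [hq] using this
  have h4 : ∀ y ∈ w4, y < x := by
    intro y hy
    have := List.mem_takeWhile_imp hy
    simpa [hq] using this
  have h1 : x ∉ w1 := by
    intro hxw
    have : x ∈ a := by rw [haw]; exact List.mem_append.2 (Or.inl hxw)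
    have := List.mem_takeWhile_imp (ha ▸ this)
    simp [hp] at this
  have hrw1 : w1.reverse.takeWhile q = [] := by
    rw [hw1, List.reverse_reverse]; exact takeWhile_dropWhile_nil q a.reverse
  have hrw5 : w5.takeWhile q = [] := takeWhile_dropWhile_nil q b
  have hL : l = w1 ++ w2 ++ x :: (w4 ++ w5) := by rw [hlab, haw, hbw]
  rw [hL, hop_decomp x w1 w2 w4 w5 h2 h4 h1 hrw1 hrw5]
  by_cases hc : (w2 = [] ∧ w4 ≠ []) ∨ (w2 ≠ [] ∧ w4 = [])
  · rw [if_pos hc,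
      hop_decomp x w1 w4 w2 w5 h4 h2 h1 hrw1 (by rw [hw5]; exact takeWhile_dropWhile_nil q b)]
    rw [if_pos (by tauto)]
  · rw [if_neg hc, hop_decomp x w1 w2 w4 w5 h2 h4 h1 hrw1 hrw5, if_neg hc]

end DMTCS
end

section
/- For all x, y ∈ [n], the valley-hopping involutions commute: φ_x ∘ φ_y = φ_y ∘ φ_x on S_n. -/
namespace DMTCS

/-! ### Helper lemmas -/

lemma tw_append_all {p : ℕ → Bool} {A B : List ℕ} (h : ∀ a ∈ A, p a = true) :
    (A ++ B).takeWhile p = A ++ B.takeWhile p := by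
  induction A with
  | nil => simp
  | cons a t ih =>
      simp only [List.cons_append, List.takeWhile_cons, h a (by simp)]
      simp [ih fun b hb => h b (by simp [hb])]

lemma dw_append_all {p : ℕ → Bool} {A B : List ℕ} (h : ∀ a ∈ A, p a = true) :
    (A ++ B).dropWhile p = B.dropWhile p := by
  induction A with
  | nil => simp
  | cons a t ih =>
      simp only [List.cons_append, List.dropWhile_cons, h a (by simp)]
      simp [ih fun b hb => h b (by simp [hb])]

lemma split_of_mem {x : ℕ} : ∀ {l : List ℕ}, x ∈ l →
    l = l.takeWhile (fun a => decide (a ≠ x)) ++ x :: (l.dropWhile (fun a => decide (a ≠ x))).tail := by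
  intro l h
  induction l with
  | nil => cases h
  | cons a t ih =>
      by_cases hax : a = x
      · subst hax; simp
      · have hxt : x ∈ t := by
          rcases List.mem_cons.1 h with h' | h'
          · exact absurd h'.symm hax
          · exact h'
        simp only [List.takeWhile_cons, List.dropWhile_cons]
        simp only [hax, decide_eq_true_eq, if_false, ite_false, decide_not]
        simp [hax]
        simpa using ih hxt

lemma head?_app {L : List ℕ} (M : List ℕ) (h : L ≠ []) : (L ++ M).head? = L.head? := by
  cases L with
  | nil => exact absurd rfl h
  | cons a t => rfl

lemma glast_app (L : List ℕ) {M : List ℕ} (h : M ≠ []) : (L ++ M).getLast? = M.getLast? := by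
  rw [← List.head?_reverse, List.reverse_append,
    head?_app _ (by simpa using h), List.head?_reverse]

lemma glast_cons (a : ℕ) (M : List ℕ) :
    (a :: M).getLast? = if M = [] then some a else M.getLast? := by
  rcases eq_or_ne M [] with h | h
  · subst h; rfl
  · rw [if_neg h, show a :: M = [a] ++ M from rfl, glast_app _ h]

/-- Main computation lemma for `hop` on a decomposed list. -/
theorem hop_eq (x : ℕ) (w1 w2 w4 w5 : List ℕ)
    (h2 : ∀ a ∈ w2, a < x) (h4 : ∀ a ∈ w4, a < x) (hx1 : x ∉ w1)
    (h1 : ∀ a, w1.getLast? = some a → ¬ a < x)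
    (h5 : ∀ a, w5.head? = some a → ¬ a < x) :
    hop x (w1 ++ w2 ++ x :: (w4 ++ w5)) =
      if (w2 = [] ∧ w4 ≠ []) ∨ (w2 ≠ [] ∧ w4 = []) then
        w1 ++ (w4 ++ x :: (w2 ++ w5)) else w1 ++ w2 ++ x :: (w4 ++ w5) := by
  have hshape : w1 ++ w2 ++ x :: (w4 ++ w5) = (w1 ++ w2) ++ (x :: (w4 ++ w5)) := by
    simp [List.append_assoc]
  have hmem : x ∈ w1 ++ w2 ++ x :: (w4 ++ w5) := by simp
  have hAll : ∀ a ∈ w1 ++ w2, (fun a => decide (a ≠ x)) a = true := by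
    intro a ha
    simp only [decide_eq_true_eq]
    rcases List.mem_append.1 ha with h | h
    · exact fun he => hx1 (he ▸ h)
    · exact Nat.ne_of_lt (h2 a h)
  have e1 : (w1 ++ w2 ++ x :: (w4 ++ w5)).takeWhile (fun a => decide (a ≠ x)) = w1 ++ w2 := by
    rw [hshape, tw_append_all hAll]; simp [List.takeWhile_cons]
  have e2 : (w1 ++ w2 ++ x :: (w4 ++ w5)).dropWhile (fun a => decide (a ≠ x)) = x :: (w4 ++ w5) := by
    rw [hshape, dw_append_all hAll]; simp [List.dropWhile_cons]
  have h2' : ∀ a ∈ w2.reverse, (fun a => decide (a < x)) a = true := by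
    intro a ha; simpa using h2 a (List.mem_reverse.1 ha)
  have e3 : (w1 ++ w2).reverse.takeWhile (fun a => decide (a < x)) = w2.reverse := by
    rw [List.reverse_append, tw_append_all h2']
    rcases hw1 : w1.reverse with _ | ⟨b, t⟩
    · simp
    · have hb : w1.getLast? = some b := by rw [← List.head?_reverse, hw1]; rfl
      have := h1 b hb
      simp [List.takeWhile_cons, this]
  have e4 : (w1 ++ w2).reverse.dropWhile (fun a => decide (a < x)) = w1.reverse := by
    rw [List.reverse_append, dw_append_all h2']
    rcases hw1 : w1.reverse with _ | ⟨b, t⟩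
    · simp
    · have hb : w1.getLast? = some b := by rw [← List.head?_reverse, hw1]; rfl
      have := h1 b hb
      simp [List.dropWhile_cons, this]
  have h4' : ∀ a ∈ w4, (fun a => decide (a < x)) a = true := by
    intro a ha; simpa using h4 a ha
  have e5 : (w4 ++ w5).takeWhile (fun a => decide (a < x)) = w4 := by
    rw [tw_append_all h4']
    rcases hw5 : w5 with _ | ⟨b, t⟩
    · simp
    · have := h5 b (by rw [hw5]; rfl)
      simp [List.takeWhile_cons, this]
  have e6 : (w4 ++ w5).dropWhile (fun a => decide (a < x)) = w5 := by
    rw [dw_append_all h4']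
    rcases hw5 : w5 with _ | ⟨b, t⟩
    · simp
    · have := h5 b (by rw [hw5]; rfl)
      simp [List.dropWhile_cons, this]
  rw [hop, if_pos hmem]
  simp only [e1, e2, List.tail_cons, e3, e4, e5, e6, List.reverse_reverse]
  split_ifs with h
  · simp [List.append_assoc]
  · rfl

/-- Existence of the canonical decomposition. -/
theorem exists_decomp (x : ℕ) (l : List ℕ) (hx : x ∈ l) :
    ∃ w1 w2 w4 w5 : List ℕ,
      l = w1 ++ w2 ++ x :: (w4 ++ w5) ∧
      (∀ a ∈ w2, a < x) ∧ (∀ a ∈ w4, a < x) ∧ x ∉ w1 ∧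
      (∀ a, w1.getLast? = some a → ¬ a < x) ∧
      (∀ a, w5.head? = some a → ¬ a < x) ∧
      w1 ++ w2 = l.takeWhile (fun a => decide (a ≠ x)) := by
  set A := l.takeWhile (fun a => decide (a ≠ x)) with hA
  set B := (l.dropWhile (fun a => decide (a ≠ x))).tail with hB
  refine ⟨(A.reverse.dropWhile (fun a => decide (a < x))).reverse,
      (A.reverse.takeWhile (fun a => decide (a < x))).reverse,
      B.takeWhile (fun a => decide (a < x)), B.dropWhile (fun a => decide (a < x)),
      ?_, ?_, ?_, ?_, ?_, ?_, ?_⟩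
  · have h12 : (A.reverse.dropWhile (fun a => decide (a < x))).reverse ++
        (A.reverse.takeWhile (fun a => decide (a < x))).reverse = A := by
      rw [← List.reverse_append, List.takeWhile_append_dropWhile, List.reverse_reverse]
    rw [h12, List.takeWhile_append_dropWhile]
    exact split_of_mem hx
  · intro a ha
    have := List.mem_takeWhile_imp (List.mem_reverse.1 ha)
    simpa using this
  · intro a ha
    have := List.mem_takeWhile_imp ha
    simpa using this
  · intro hmem
    have hxA : x ∈ A :=
      List.mem_reverse.1 ((List.dropWhile_sublist _).subset (List.mem_reverse.1 hmem))
    have := List.mem_takeWhile_imp hxA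
    simp at this
  · intro a ha
    rw [List.getLast?_reverse] at ha
    rcases hD : A.reverse.dropWhile (fun b => decide (b < x)) with _ | ⟨b, t⟩
    · rw [hD] at ha; cases ha
    · have hnn : A.reverse.dropWhile (fun b => decide (b < x)) ≠ [] := by rw [hD]; simp
      have := List.head_dropWhile_not (fun b => decide (b < x)) hnn
      simp only [hD, List.head_cons] at this
      rw [hD] at ha
      simp only [List.head?_cons, Option.some.injEq] at ha
      subst ha
      simpa using this
  · intro a ha
    rcases hD : B.dropWhile (fun b => decide (b < x)) with _ | ⟨b, t⟩
    · rw [hD] at ha; cases ha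
    · have hnn : B.dropWhile (fun b => decide (b < x)) ≠ [] := by rw [hD]; simp
      have := List.head_dropWhile_not (fun b => decide (b < x)) hnn
      simp only [hD, List.head_cons] at this
      rw [hD] at ha
      simp only [List.head?_cons, Option.some.injEq] at ha
      subst ha
      simpa using this
  · rw [← List.reverse_append, List.takeWhile_append_dropWhile, List.reverse_reverse]

lemma hop_of_not_mem {x : ℕ} {l : List ℕ} (h : x ∉ l) : hop x l = l := by
  rw [hop, if_neg h]

theorem hop_perm (x : ℕ) (l : List ℕ) : (hop x l).Perm l := by
  by_cases hx : x ∈ l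
  · obtain ⟨w1, w2, w4, w5, hl, h2, h4, hx1, h1, h5, -⟩ := exists_decomp x l hx
    rw [hl, hop_eq x w1 w2 w4 w5 h2 h4 hx1 h1 h5]
    split_ifs
    · rw [List.perm_iff_count]
      intro a
      simp [List.count_append, List.count_cons]
      ring
    · exact List.Perm.refl _
  · rw [hop_of_not_mem hx]

theorem hop_rev (x : ℕ) (l : List ℕ) (nd : l.Nodup) : hop x l.reverse = (hop x l).reverse := by
  by_cases hx : x ∈ l
  · obtain ⟨w1, w2, w4, w5, hl, h2, h4, hx1, h1, h5, -⟩ := exists_decomp x l hx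
    subst hl
    have hx45 : x ∉ w4 ++ w5 := by
      intro hmem
      rw [show w1 ++ w2 ++ x :: (w4 ++ w5) = (w1 ++ w2) ++ x :: (w4 ++ w5) by
        simp [List.append_assoc]] at nd
      exact (List.nodup_cons.1 (List.nodup_append.1 nd).2.1).1 hmem
    have hrev : (w1 ++ w2 ++ x :: (w4 ++ w5)).reverse =
        w5.reverse ++ w4.reverse ++ x :: (w2.reverse ++ w1.reverse) := by
      simp [List.reverse_append]
    rw [hrev]
    rw [hop_eq x w5.reverse w4.reverse w2.reverse w1.reverse
      (fun a ha => h4 a (List.mem_reverse.1 ha))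
      (fun a ha => h2 a (List.mem_reverse.1 ha))
      (fun hmem => hx45 (List.mem_append.2 (Or.inr (List.mem_reverse.1 hmem))))
      (fun a ha => h5 a (by rwa [List.getLast?_reverse] at ha))
      (fun a ha => h1 a (by rwa [List.head?_reverse] at ha))]
    rw [hop_eq x w1 w2 w4 w5 h2 h4 hx1 h1 h5]
    have hiff : ((w4.reverse = [] ∧ w2.reverse ≠ []) ∨ (w4.reverse ≠ [] ∧ w2.reverse = [])) ↔
        ((w2 = [] ∧ w4 ≠ []) ∨ (w2 ≠ [] ∧ w4 = [])) := by
      simp only [ne_eq, List.reverse_eq_nil_iff]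
      tauto
    split_ifs with hA hB hB
    · simp [List.reverse_append]
    · exact absurd (hiff.1 hA) hB
    · exact absurd (hiff.2 hB) hA
    · simp [List.reverse_append]
  · rw [hop_of_not_mem hx, hop_of_not_mem (by simpa using hx)]

theorem key_before (x y : ℕ) (l : List ℕ) (nd : l.Nodup) (hxy : x < y) (hy : y ∈ l)
    (hbef : x ∈ l.takeWhile (fun a => decide (a ≠ y))) :
    hop x (hop y l) = hop y (hop x l) := by
  obtain ⟨w1, w2, w4, w5, hl, c2, c4, hy1, g1, g5, hA⟩ := exists_decomp y l hy
  subst hl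
  have hx12 : x ∈ w1 ++ w2 := by rw [hA]; exact hbef
  have hxy' : x ≠ y := Nat.ne_of_lt hxy
  have nd' : (w1 ++ (w2 ++ y :: (w4 ++ w5))).Nodup := by simpa [List.append_assoc] using nd
  obtain ⟨nd1, nd2, disj1⟩ := List.nodup_append.1 nd'
  obtain ⟨nd3, nd4, disj2⟩ := List.nodup_append.1 nd2
  obtain ⟨hy45, nd5⟩ := List.nodup_cons.1 nd4
  have hyw1 : y ∉ w1 := fun h => disj1 y h y (by simp) rfl
  have EY : hop y (w1 ++ w2 ++ y :: (w4 ++ w5)) =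
      if (w2 = [] ∧ w4 ≠ []) ∨ (w2 ≠ [] ∧ w4 = []) then w1 ++ (w4 ++ y :: (w2 ++ w5))
      else w1 ++ w2 ++ y :: (w4 ++ w5) :=
    hop_eq y w1 w2 w4 w5 c2 c4 hyw1 g1 g5
  rcases List.mem_append.1 hx12 with hxw1 | hxw2
  · -- CASE x ∈ w1
    obtain ⟨u1, u2, u4, u5, hw1, k2, k4, kx1, k1, k5, -⟩ := exists_decomp x w1 hxw1
    have hu5ne : u5 ≠ [] := by
      intro h
      subst h
      have hg : w1.getLast? = (x :: (u4 ++ [])).getLast? := by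
        rw [hw1, show u1 ++ u2 ++ x :: (u4 ++ []) = (u1 ++ u2) ++ (x :: (u4 ++ [])) by
          simp [List.append_assoc], glast_app _ (by simp)]
      rcases eq_or_ne u4 [] with h4 | h4
      · subst h4
        simp only [List.append_nil] at hg
        have := g1 x (by rw [hg]; rfl)
        omega
      · have hgl : (x :: (u4 ++ [])).getLast? = u4.getLast? := by
          rw [List.append_nil, glast_cons, if_neg h4]
        obtain ⟨b, t, hbt⟩ := List.exists_cons_of_ne_nil h4
        have hbmem : u4.getLast (by simp [hbt]) ∈ u4 := List.getLast_mem _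
        have hbx : u4.getLast (by simp [hbt]) < x := k4 _ hbmem
        have := g1 (u4.getLast (by simp [hbt]))
          (by rw [hg, hgl]; exact List.getLast?_eq_getLast _)
        omega
    have K5 : ∀ (Z : List ℕ) (a : ℕ), (u5 ++ Z).head? = some a → ¬ a < x := by
      intro Z a ha
      rw [head?_app _ hu5ne] at ha
      exact k5 a ha
    have hgl : w1.getLast? = u5.getLast? := by
      rw [hw1, show u1 ++ u2 ++ x :: (u4 ++ u5) = (u1 ++ u2 ++ (x :: u4)) ++ u5 by
        simp [List.append_assoc], glast_app _ hu5ne]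
    have hyW1' : y ∉ u1 ++ u4 ++ x :: (u2 ++ u5) := by
      intro h
      have : y = x ∨ y ∈ w1 := by
        rw [hw1]
        simp only [List.mem_append, List.mem_cons] at h ⊢
        tauto
      rcases this with h' | h'
      · exact hxy' h'.symm
      · exact hyw1 h'
    have G1' : ∀ a, (u1 ++ u4 ++ x :: (u2 ++ u5)).getLast? = some a → ¬ a < y := by
      intro a ha
      rw [show u1 ++ u4 ++ x :: (u2 ++ u5) = (u1 ++ u4 ++ x :: u2) ++ u5 by
        simp [List.append_assoc], glast_app _ hu5ne] at ha
      exact g1 a (by rw [hgl]; exact ha)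
    have EX : hop x (w1 ++ w2 ++ y :: (w4 ++ w5)) =
        if (u2 = [] ∧ u4 ≠ []) ∨ (u2 ≠ [] ∧ u4 = []) then
          u1 ++ (u4 ++ x :: (u2 ++ (u5 ++ (w2 ++ y :: (w4 ++ w5)))))
        else w1 ++ w2 ++ y :: (w4 ++ w5) := by
      rw [show w1 ++ w2 ++ y :: (w4 ++ w5) =
        u1 ++ u2 ++ x :: (u4 ++ (u5 ++ (w2 ++ y :: (w4 ++ w5)))) by
        rw [hw1]; simp [List.append_assoc]]
      exact hop_eq x u1 u2 u4 (u5 ++ (w2 ++ y :: (w4 ++ w5))) k2 k4 kx1 k1 (K5 _)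
    have EXY : hop x (w1 ++ (w4 ++ y :: (w2 ++ w5))) =
        if (u2 = [] ∧ u4 ≠ []) ∨ (u2 ≠ [] ∧ u4 = []) then
          u1 ++ (u4 ++ x :: (u2 ++ (u5 ++ (w4 ++ y :: (w2 ++ w5)))))
        else w1 ++ (w4 ++ y :: (w2 ++ w5)) := by
      rw [show w1 ++ (w4 ++ y :: (w2 ++ w5)) =
        u1 ++ u2 ++ x :: (u4 ++ (u5 ++ (w4 ++ y :: (w2 ++ w5)))) by
        rw [hw1]; simp [List.append_assoc]]
      exact hop_eq x u1 u2 u4 (u5 ++ (w4 ++ y :: (w2 ++ w5))) k2 k4 kx1 k1 (K5 _)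
    have EYX : hop y (u1 ++ (u4 ++ x :: (u2 ++ (u5 ++ (w2 ++ y :: (w4 ++ w5)))))) =
        if (w2 = [] ∧ w4 ≠ []) ∨ (w2 ≠ [] ∧ w4 = []) then
          (u1 ++ u4 ++ x :: (u2 ++ u5)) ++ (w4 ++ y :: (w2 ++ w5))
        else u1 ++ (u4 ++ x :: (u2 ++ (u5 ++ (w2 ++ y :: (w4 ++ w5))))) := by
      rw [show u1 ++ (u4 ++ x :: (u2 ++ (u5 ++ (w2 ++ y :: (w4 ++ w5))))) =
        (u1 ++ u4 ++ x :: (u2 ++ u5)) ++ w2 ++ y :: (w4 ++ w5) by simp [List.append_assoc]]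
      exact hop_eq y (u1 ++ u4 ++ x :: (u2 ++ u5)) w2 w4 w5 c2 c4 hyW1' G1' g5
    rw [EY, EX]
    by_cases hcx : (u2 = [] ∧ u4 ≠ []) ∨ (u2 ≠ [] ∧ u4 = []) <;>
      by_cases hcy : (w2 = [] ∧ w4 ≠ []) ∨ (w2 ≠ [] ∧ w4 = [])
    · rw [if_pos hcx, if_pos hcy, EXY, if_pos hcx, EYX, if_pos hcy]
      simp [List.append_assoc]
    · rw [if_pos hcx, if_neg hcy, EYX, if_neg hcy, EX, if_pos hcx]
    · rw [if_neg hcx, if_pos hcy, EXY, if_neg hcx, EY, if_pos hcy]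
    · rw [if_neg hcx, if_neg hcy, EX, if_neg hcx, EY, if_neg hcy]
  · -- CASE x ∈ w2
    obtain ⟨u1, u2, u4, u5, hw2, k2, k4, kx1, k1, k5, -⟩ := exists_decomp x w2 hxw2
    have hw2ne : w2 ≠ [] := List.ne_nil_of_mem hxw2
    have hxw1 : x ∉ w1 := fun h => disj1 x h x (by simp [hxw2]) rfl
    have hxw4 : x ∉ w4 := fun h => disj2 x hxw2 x (by simp [h]) rfl
    have hW2'ne : (u1 ++ u4 ++ x :: (u2 ++ u5)) ≠ [] := by simp
    have hally : ∀ a ∈ u1 ++ u4 ++ x :: (u2 ++ u5), a < y := by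
      intro a ha
      have : a = x ∨ a ∈ w2 := by
        rw [hw2]
        simp only [List.mem_append, List.mem_cons] at ha ⊢
        tauto
      rcases this with h | h
      · omega
      · exact c2 a h
    have G1a : ∀ a, (w1 ++ u1).getLast? = some a → ¬ a < x := by
      intro a ha
      rcases eq_or_ne u1 [] with h | h
      · subst h
        rw [List.append_nil] at ha
        have := g1 a ha
        omega
      · rw [glast_app _ h] at ha
        exact k1 a ha
    have G1b : ∀ a, (w1 ++ (w4 ++ y :: u1)).getLast? = some a → ¬ a < x := by
      intro a ha
      rw [glast_app _ (show w4 ++ y :: u1 ≠ [] by simp),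
        glast_app _ (show y :: u1 ≠ [] by simp), glast_cons] at ha
      split_ifs at ha with h
      · injection ha with ha'
        omega
      · exact k1 a ha
    have H5a : ∀ a, (u5 ++ (y :: (w4 ++ w5))).head? = some a → ¬ a < x := by
      intro a ha
      rcases eq_or_ne u5 [] with h | h
      · subst h
        rw [List.nil_append, List.head?_cons] at ha
        injection ha with ha'
        omega
      · rw [head?_app _ h] at ha
        exact k5 a ha
    have H5b : ∀ a, (u5 ++ w5).head? = some a → ¬ a < x := by
      intro a ha
      rcases eq_or_ne u5 [] with h | h
      · subst h
        rw [List.nil_append] at ha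
        have := g5 a ha
        omega
      · rw [head?_app _ h] at ha
        exact k5 a ha
    have hxL1 : x ∉ w1 ++ u1 := by
      simp only [List.mem_append]
      rintro (h | h)
      exacts [hxw1 h, kx1 h]
    have hxL2 : x ∉ w1 ++ (w4 ++ y :: u1) := by
      simp only [List.mem_append, List.mem_cons]
      rintro (h | h | h | h)
      exacts [hxw1 h, hxw4 h, hxy' h, kx1 h]
    have EX : hop x (w1 ++ w2 ++ y :: (w4 ++ w5)) =
        if (u2 = [] ∧ u4 ≠ []) ∨ (u2 ≠ [] ∧ u4 = []) then
          (w1 ++ u1) ++ (u4 ++ x :: (u2 ++ (u5 ++ (y :: (w4 ++ w5)))))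
        else w1 ++ w2 ++ y :: (w4 ++ w5) := by
      rw [show w1 ++ w2 ++ y :: (w4 ++ w5) =
        (w1 ++ u1) ++ u2 ++ x :: (u4 ++ (u5 ++ (y :: (w4 ++ w5)))) by
        rw [hw2]; simp [List.append_assoc]]
      exact hop_eq x (w1 ++ u1) u2 u4 (u5 ++ (y :: (w4 ++ w5))) k2 k4 hxL1 G1a H5a
    have EXY : hop x (w1 ++ (w4 ++ y :: (w2 ++ w5))) =
        if (u2 = [] ∧ u4 ≠ []) ∨ (u2 ≠ [] ∧ u4 = []) then
          (w1 ++ (w4 ++ y :: u1)) ++ (u4 ++ x :: (u2 ++ (u5 ++ w5)))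
        else w1 ++ (w4 ++ y :: (w2 ++ w5)) := by
      rw [show w1 ++ (w4 ++ y :: (w2 ++ w5)) =
        (w1 ++ (w4 ++ y :: u1)) ++ u2 ++ x :: (u4 ++ (u5 ++ w5)) by
        rw [hw2]; simp [List.append_assoc]]
      exact hop_eq x (w1 ++ (w4 ++ y :: u1)) u2 u4 (u5 ++ w5) k2 k4 hxL2 G1b H5b
    have EYX : hop y ((w1 ++ u1) ++ (u4 ++ x :: (u2 ++ (u5 ++ (y :: (w4 ++ w5)))))) =
        if ((u1 ++ u4 ++ x :: (u2 ++ u5)) = [] ∧ w4 ≠ []) ∨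
            ((u1 ++ u4 ++ x :: (u2 ++ u5)) ≠ [] ∧ w4 = []) then
          w1 ++ (w4 ++ y :: ((u1 ++ u4 ++ x :: (u2 ++ u5)) ++ w5))
        else (w1 ++ u1) ++ (u4 ++ x :: (u2 ++ (u5 ++ (y :: (w4 ++ w5))))) := by
      rw [show (w1 ++ u1) ++ (u4 ++ x :: (u2 ++ (u5 ++ (y :: (w4 ++ w5))))) =
        w1 ++ (u1 ++ u4 ++ x :: (u2 ++ u5)) ++ y :: (w4 ++ w5) by simp [List.append_assoc]]
      exact hop_eq y w1 (u1 ++ u4 ++ x :: (u2 ++ u5)) w4 w5 hally c4 hyw1 g1 g5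
    have hcyiff : ((w2 = [] ∧ w4 ≠ []) ∨ (w2 ≠ [] ∧ w4 = [])) ↔ w4 = [] :=
      ⟨fun h => h.elim (fun h => absurd h.1 hw2ne) And.right, fun h => Or.inr ⟨hw2ne, h⟩⟩
    have hcy'iff : (((u1 ++ u4 ++ x :: (u2 ++ u5)) = [] ∧ w4 ≠ []) ∨
        ((u1 ++ u4 ++ x :: (u2 ++ u5)) ≠ [] ∧ w4 = [])) ↔ w4 = [] :=
      ⟨fun h => h.elim (fun h => absurd h.1 hW2'ne) And.right, fun h => Or.inr ⟨hW2'ne, h⟩⟩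
    rw [EY, EX]
    by_cases hcx : (u2 = [] ∧ u4 ≠ []) ∨ (u2 ≠ [] ∧ u4 = []) <;> by_cases hw4e : w4 = []
    · rw [if_pos hcx, if_pos (hcyiff.2 hw4e), EXY, if_pos hcx, EYX, if_pos (hcy'iff.2 hw4e)]
      subst hw4e
      simp [List.append_assoc]
    · rw [if_pos hcx, if_neg (fun h => hw4e (hcyiff.1 h)), EX, if_pos hcx, EYX,
        if_neg (fun h => hw4e (hcy'iff.1 h))]
    · rw [if_neg hcx, if_pos (hcyiff.2 hw4e), EXY, if_neg hcx, EY, if_pos (hcyiff.2 hw4e)]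
    · rw [if_neg hcx, if_neg (fun h => hw4e (hcyiff.1 h)), EX, if_neg hcx, EY,
        if_neg (fun h => hw4e (hcyiff.1 h))]

theorem key (x y : ℕ) (l : List ℕ) (nd : l.Nodup) (hxy : x < y) (hx : x ∈ l) (hy : y ∈ l) :
    hop x (hop y l) = hop y (hop x l) := by
  by_cases hbef : x ∈ l.takeWhile (fun a => decide (a ≠ y))
  · exact key_before x y l nd hxy hy hbef
  · have hndr : l.reverse.Nodup := List.nodup_reverse.2 nd
    have hbefr : x ∈ l.reverse.takeWhile (fun a => decide (a ≠ y)) := by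
      obtain ⟨w1, w2, w4, w5, hl, c2, c4, hy1, g1, g5, hA⟩ := exists_decomp y l hy
      have hx45 : x ∈ w4 ++ w5 := by
        have hx' := hx
        rw [hl] at hx'
        simp only [List.mem_append, List.mem_cons] at hx'
        rcases hx' with (h | h) | h | h
        · exact absurd (by rw [← hA]; exact List.mem_append.2 (Or.inl h)) hbef
        · exact absurd (by rw [← hA]; exact List.mem_append.2 (Or.inr h)) hbef
        · exact absurd h (Nat.ne_of_lt hxy)
        · exact List.mem_append.2 h
      have hy45 : y ∉ w4 ++ w5 := by
        rw [hl, show w1 ++ w2 ++ y :: (w4 ++ w5) = (w1 ++ w2) ++ y :: (w4 ++ w5) by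
          simp [List.append_assoc]] at nd
        exact (List.nodup_cons.1 (List.nodup_append.1 nd).2.1).1
      rw [hl, show w1 ++ w2 ++ y :: (w4 ++ w5) = (w1 ++ w2) ++ y :: (w4 ++ w5) by
        simp [List.append_assoc], List.reverse_append, List.reverse_cons,
        show (w4 ++ w5).reverse ++ [y] ++ (w1 ++ w2).reverse
          = (w4 ++ w5).reverse ++ (y :: (w1 ++ w2).reverse) by simp]
      rw [tw_append_all (by
        intro a ha
        simp only [decide_eq_true_eq]
        exact fun he => hy45 (he ▸ List.mem_reverse.1 ha))]
      exact List.mem_append.2 (Or.inl (List.mem_reverse.2 hx45))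
    have hcomm := key_before x y l.reverse hndr hxy (by simpa using hy) hbefr
    rw [hop_rev y l nd, hop_rev x l nd, hop_rev x (hop y l) ((hop_perm y l).symm.nodup nd),
      hop_rev y (hop x l) ((hop_perm x l).symm.nodup nd)] at hcomm
    exact List.reverse_injective hcomm

/-- The valley-hopping involutions commute: `φ_x ∘ φ_y = φ_y ∘ φ_x`. -/
theorem stmt_8 (n : ℕ) (l : List ℕ) (hl : l.Perm (List.range' 1 n))
    (x y : ℕ) (hx : x ∈ l) (hy : y ∈ l) :
    hop x (hop y l) = hop y (hop x l) := by
  have nd : l.Nodup := hl.nodup_iff.2 (List.nodup_range')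
  rcases lt_trichotomy x y with h | h | h
  · exact key x y l nd h hx hy
  · subst h; rfl
  · exact (key y x l nd h hy hx).symm

end DMTCS
end

section
/- Valley-hopping preserves the set of peaks: x ∈ [n] is a peak of π if and only if x is a peak of φ_y(π), for any y ∈ [n]. In particular, the number of peaks is constant on each valley-hopping orbit. -/
namespace DMTCS

def IsPeak (l : List ℕ) (x : ℕ) : Prop :=
  ∃ i, 1 ≤ i ∧ i ≤ l.length ∧ entry l i = (x : WithTop ℕ) ∧
    entry l (i - 1) < entry l i ∧ entry l (i + 1) < entry l i

def IsValley (l : List ℕ) (x : ℕ) : Prop :=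
  ∃ i, 1 ≤ i ∧ i ≤ l.length ∧ entry l i = (x : WithTop ℕ) ∧
    entry l i < entry l (i - 1) ∧ entry l i < entry l (i + 1)

def IsDblAsc (l : List ℕ) (x : ℕ) : Prop :=
  ∃ i, 1 ≤ i ∧ i ≤ l.length ∧ entry l i = (x : WithTop ℕ) ∧
    entry l (i - 1) < entry l i ∧ entry l i < entry l (i + 1)

def IsDblDes (l : List ℕ) (x : ℕ) : Prop :=
  ∃ i, 1 ≤ i ∧ i ≤ l.length ∧ entry l i = (x : WithTop ℕ) ∧
    entry l (i + 1) < entry l i ∧ entry l i < entry l (i - 1)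

/-- positional characterization -/
def Pk (l : List ℕ) (x : ℕ) : Prop :=
  ∃ j a b, l[j]? = some a ∧ l[j+1]? = some x ∧ l[j+2]? = some b ∧ a < x ∧ b < x

lemma entry_in (l : List ℕ) (i : ℕ) (h1 : 1 ≤ i) (h2 : i ≤ l.length) :
    entry l i = ((l[i-1]'(by omega) : ℕ) : WithTop ℕ) := by
  rw [entry, dif_pos ⟨h1, h2⟩]
  rfl

lemma entry_out (l : List ℕ) (i : ℕ) (h : ¬ (1 ≤ i ∧ i ≤ l.length)) :
    entry l i = ⊤ := by
  rw [entry, dif_neg h]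

lemma isPeak_iff_pk (l : List ℕ) (x : ℕ) : IsPeak l x ↔ Pk l x := by
  constructor
  · rintro ⟨i, h1, h2, hx, ha, hb⟩
    rw [entry_in l i h1 h2] at hx ha hb
    have hain : 1 ≤ i - 1 ∧ i - 1 ≤ l.length := by
      by_contra hc
      rw [entry_out l (i-1) hc] at ha
      exact (not_top_lt ha)
    have hbin : 1 ≤ i + 1 ∧ i + 1 ≤ l.length := by
      by_contra hc
      rw [entry_out l (i+1) hc] at hb
      exact (not_top_lt hb)
    have hi2 : 2 ≤ i := by omega
    rw [entry_in l (i-1) hain.1 hain.2] at ha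
    rw [entry_in l (i+1) hbin.1 hbin.2] at hb
    set j := i - 2 with hj
    have e0 : i - 1 - 1 = j := by omega
    have e1 : i - 1 = j + 1 := by omega
    have e2 : i + 1 - 1 = j + 2 := by omega
    simp only [e0, e1, e2] at hx ha hb
    have hxv : l[j+1]'(by omega) = x := by exact_mod_cast hx
    refine ⟨j, l[j]'(by omega), l[j+2]'(by omega),
      List.getElem?_eq_getElem (by omega), ?_, List.getElem?_eq_getElem (by omega), ?_, ?_⟩
    · rw [List.getElem?_eq_getElem (by omega), hxv]
    · rw [← hxv]; exact_mod_cast ha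
    · rw [← hxv]; exact_mod_cast hb
  · rintro ⟨j, a, b, h1, h2, h3, hax, hbx⟩
    obtain ⟨hj1, ha⟩ := List.getElem?_eq_some_iff.mp h1
    obtain ⟨hj2, hx⟩ := List.getElem?_eq_some_iff.mp h2
    obtain ⟨hj3, hb⟩ := List.getElem?_eq_some_iff.mp h3
    refine ⟨j + 2, by omega, by omega, ?_, ?_, ?_⟩
    · rw [entry_in l (j+2) (by omega) (by omega)]
      simp only [show j + 2 - 1 = j + 1 by omega, hx]
    · rw [entry_in l (j+2) (by omega) (by omega), entry_in l (j+2-1) (by omega) (by omega)]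
      simp only [show j + 2 - 1 - 1 = j by omega, show j + 2 - 1 = j + 1 by omega, show j + 1 - 1 = j by omega, hx, ha]
      exact_mod_cast hax
    · rw [entry_in l (j+2) (by omega) (by omega), entry_in l (j+2+1) (by omega) (by omega)]
      simp only [show j + 2 + 1 - 1 = j + 2 by omega, show j + 2 - 1 = j + 1 by omega, hx, hb]
      exact_mod_cast hbx


lemma pk_iff_infix (l : List ℕ) (x : ℕ) :
    Pk l x ↔ ∃ a b, a < x ∧ b < x ∧ [a, x, b] <:+: l := by
  constructor
  · rintro ⟨j, a, b, h1, h2, h3, hax, hbx⟩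
    obtain ⟨hj1, ha⟩ := List.getElem?_eq_some_iff.mp h1
    obtain ⟨hj2, hx⟩ := List.getElem?_eq_some_iff.mp h2
    obtain ⟨hj3, hb⟩ := List.getElem?_eq_some_iff.mp h3
    refine ⟨a, b, hax, hbx, l.take j, l.drop (j+3), ?_⟩
    rw [List.append_assoc]
    conv_rhs => rw [← List.take_append_drop j l]
    congr 1
    rw [← List.getElem_cons_drop hj1, ← List.getElem_cons_drop hj2,
      ← List.getElem_cons_drop hj3, ha, hx, hb]
    rfl
  · rintro ⟨a, b, hax, hbx, s, t, he⟩
    rw [List.append_assoc] at he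
    have key : ∀ k : ℕ, (s ++ ([a, x, b] ++ t))[s.length + k]? = ([a, x, b] ++ t)[k]? := by
      intro k
      rw [List.getElem?_append_right (Nat.le_add_right _ _)]
      congr 1
      omega
    refine ⟨s.length, a, b, ?_, ?_, ?_, hax, hbx⟩
    · have := key 0
      rw [Nat.add_zero] at this
      rw [← he, this]; simp
    · rw [← he, key 1]; simp
    · rw [← he, key 2]; simp

lemma isPeak_reverse (l : List ℕ) (x : ℕ) : IsPeak l.reverse x ↔ IsPeak l x := by
  rw [isPeak_iff_pk, isPeak_iff_pk, pk_iff_infix, pk_iff_infix]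
  constructor
  · rintro ⟨a, b, hax, hbx, hinf⟩
    refine ⟨b, a, hbx, hax, ?_⟩
    have h : [a, x, b] = ([b, x, a] : List ℕ).reverse := by simp
    rw [h] at hinf
    exact List.reverse_infix.mp hinf
  · rintro ⟨a, b, hax, hbx, hinf⟩
    refine ⟨b, a, hbx, hax, ?_⟩
    have h : [b, x, a] = ([a, x, b] : List ℕ).reverse := by simp
    rw [h]
    exact List.reverse_infix.mpr hinf


lemma gb (u s : List ℕ) (y k : ℕ) :
    (u ++ y :: s)[k]? = if k < u.length then u[k]?
      else if k = u.length then some y else s[k - u.length - 1]? := by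
  by_cases h : k < u.length
  · rw [if_pos h, List.getElem?_append_left h]
  · rw [if_neg h, List.getElem?_append_right (Nat.le_of_not_lt h)]
    by_cases h2 : k = u.length
    · rw [if_pos h2, h2]
      simp
    · rw [if_neg h2]
      obtain ⟨d, hd⟩ : ∃ d, k - u.length = d + 1 := ⟨k - u.length - 1, by omega⟩
      rw [hd, List.getElem?_cons_succ]
      congr 1

lemma core_fwd (u v w : List ℕ) (y x : ℕ)
    (Hv : ∀ a ∈ v, a < y)
    (Hu : ∀ a ∈ u.getLast?, y < a)
    (Hw : ∀ a ∈ w.head?, y < a)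
    (h : Pk (u ++ y :: (v ++ w)) x) : Pk ((u ++ v) ++ y :: w) x := by
  rcases List.eq_nil_or_concat v with hv | _
  · subst hv
    rw [List.append_nil]
    rw [List.nil_append] at h
    exact h
  obtain ⟨j, a, b, h1, h2, h3, hax, hbx⟩ := h
  set p := u.length with hp
  set m := v.length with hm
  have hm1 : 1 ≤ m := by
    rcases v with _ | ⟨c, v'⟩
    · simp_all
    · simp [hm]
  have G : ∀ k : ℕ, (u ++ y :: (v ++ w))[k]? = if k < p then u[k]?
      else if k = p then some y else (v ++ w)[k - p - 1]? := fun k => gb u (v ++ w) y k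
  have Guv : (u ++ v).length = p + m := by simp [hp, hm]
  have H : ∀ k : ℕ, ((u ++ v) ++ y :: w)[k]? = if k < p + m then (u ++ v)[k]?
      else if k = p + m then some y else w[k - (p + m) - 1]? := by
    intro k
    rw [gb (u ++ v) w y k, Guv]
  rw [G] at h1 h2 h3
  by_cases cA : j + 2 < p
  · rw [if_pos (show j < p by omega)] at h1
    rw [if_pos (show j + 1 < p by omega)] at h2
    rw [if_pos (show j + 2 < p by omega)] at h3
    refine ⟨j, a, b, ?_, ?_, ?_, hax, hbx⟩
    · rw [H, if_pos (show j < p + m by omega), List.getElem?_append_left (show j < u.length by omega)]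
      exact h1
    · rw [H, if_pos (show j + 1 < p + m by omega),
        List.getElem?_append_left (show j + 1 < u.length by omega)]
      exact h2
    · rw [H, if_pos (show j + 2 < p + m by omega),
        List.getElem?_append_left (show j + 2 < u.length by omega)]
      exact h3
  by_cases cB : j + 2 = p
  · rw [if_pos (show j < p by omega)] at h1
    rw [if_pos (show j + 1 < p by omega)] at h2
    rw [if_neg (show ¬ (j + 2 < p) by omega), if_pos cB] at h3
    have hby : y = b := Option.some.inj h3
    have hv0 : v[0]'(by omega) ∈ v := List.getElem_mem _
    refine ⟨j, a, v[0]'(by omega), ?_, ?_, ?_, hax, ?_⟩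
    · rw [H, if_pos (show j < p + m by omega), List.getElem?_append_left (show j < u.length by omega)]
      exact h1
    · rw [H, if_pos (show j + 1 < p + m by omega),
        List.getElem?_append_left (show j + 1 < u.length by omega)]
      exact h2
    · rw [H, if_pos (show j + 2 < p + m by omega),
        List.getElem?_append_right (show u.length ≤ j + 2 by omega)]
      rw [show j + 2 - u.length = 0 by omega]
      rw [List.getElem?_eq_getElem (by omega)]
    · have := Hv _ hv0
      omega
  by_cases cC : j + 1 = p
  · rw [if_pos (show j < p by omega)] at h1
    rw [if_neg (show ¬ (j + 1 < p) by omega), if_pos cC] at h2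
    have hxy : y = x := Option.some.inj h2
    have hlast : u.getLast? = some a := by
      rw [List.getLast?_eq_getElem?, show u.length - 1 = j by omega]
      exact h1
    have := Hu a hlast
    omega
  by_cases cD : j = p
  · rw [if_neg (show ¬ (j + 1 < p) by omega), if_neg (show ¬ (j + 1 = p) by omega),
      List.getElem?_append_left (show j + 1 - p - 1 < v.length by omega)] at h2
    have hxv : x ∈ v := List.mem_of_getElem? h2
    have hxy : x < y := Hv _ hxv
    rw [if_neg (show ¬ (j < p) by omega), if_pos cD] at h1
    have hay : y = a := Option.some.inj h1
    omega
  have hjp : p < j := by omega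
  by_cases cE : j + 2 ≤ p + m
  · rw [if_neg (show ¬ (j < p) by omega), if_neg (show ¬ (j = p) by omega),
      List.getElem?_append_left (show j - p - 1 < v.length by omega)] at h1
    rw [if_neg (show ¬ (j + 1 < p) by omega), if_neg (show ¬ (j + 1 = p) by omega),
      List.getElem?_append_left (show j + 1 - p - 1 < v.length by omega)] at h2
    rw [if_neg (show ¬ (j + 2 < p) by omega), if_neg (show ¬ (j + 2 = p) by omega),
      List.getElem?_append_left (show j + 2 - p - 1 < v.length by omega)] at h3
    refine ⟨j - 1, a, b, ?_, ?_, ?_, hax, hbx⟩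
    · rw [H, if_pos (show j - 1 < p + m by omega),
        List.getElem?_append_right (show u.length ≤ j - 1 by omega)]
      rw [show j - 1 - u.length = j - p - 1 by omega]
      exact h1
    · rw [show j - 1 + 1 = j by omega, H, if_pos (show j < p + m by omega),
        List.getElem?_append_right (show u.length ≤ j by omega)]
      rw [show j - u.length = j + 1 - p - 1 by omega]
      exact h2
    · rw [show j - 1 + 2 = j + 1 by omega, H, if_pos (show j + 1 < p + m by omega),
        List.getElem?_append_right (show u.length ≤ j + 1 by omega)]
      rw [show j + 1 - u.length = j + 2 - p - 1 by omega]
      exact h3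
  by_cases cF : j + 2 = p + m + 1
  · rw [if_neg (show ¬ (j + 1 < p) by omega), if_neg (show ¬ (j + 1 = p) by omega),
      List.getElem?_append_left (show j + 1 - p - 1 < v.length by omega)] at h2
    have hxv : x ∈ v := List.mem_of_getElem? h2
    have hxy : x < y := Hv _ hxv
    rw [if_neg (show ¬ (j + 2 < p) by omega), if_neg (show ¬ (j + 2 = p) by omega),
      List.getElem?_append_right (show v.length ≤ j + 2 - p - 1 by omega)] at h3
    have hbw : w.head? = some b := by
      rw [List.head?_eq_getElem?, show (0 : ℕ) = j + 2 - p - 1 - v.length by omega]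
      exact h3
    have := Hw b hbw
    omega
  by_cases cG : j = p + m
  · rw [if_neg (show ¬ (j + 1 < p) by omega), if_neg (show ¬ (j + 1 = p) by omega),
      List.getElem?_append_right (show v.length ≤ j + 1 - p - 1 by omega)] at h2
    have hxw : w.head? = some x := by
      rw [List.head?_eq_getElem?, show (0 : ℕ) = j + 1 - p - 1 - v.length by omega]
      exact h2
    have hyx : y < x := Hw x hxw
    rw [if_neg (show ¬ (j + 2 < p) by omega), if_neg (show ¬ (j + 2 = p) by omega),
      List.getElem?_append_right (show v.length ≤ j + 2 - p - 1 by omega)] at h3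
    refine ⟨j, y, b, ?_, ?_, ?_, hyx, hbx⟩
    · rw [H, if_neg (show ¬ (j < p + m) by omega), if_pos cG]
    · rw [H, if_neg (show ¬ (j + 1 < p + m) by omega), if_neg (show ¬ (j + 1 = p + m) by omega)]
      rw [show j + 1 - (p + m) - 1 = j + 1 - p - 1 - v.length by omega]
      exact h2
    · rw [H, if_neg (show ¬ (j + 2 < p + m) by omega), if_neg (show ¬ (j + 2 = p + m) by omega)]
      rw [show j + 2 - (p + m) - 1 = j + 2 - p - 1 - v.length by omega]
      exact h3
  have hjm : p + m < j := by omega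
  rw [if_neg (show ¬ (j < p) by omega), if_neg (show ¬ (j = p) by omega),
    List.getElem?_append_right (show v.length ≤ j - p - 1 by omega)] at h1
  rw [if_neg (show ¬ (j + 1 < p) by omega), if_neg (show ¬ (j + 1 = p) by omega),
    List.getElem?_append_right (show v.length ≤ j + 1 - p - 1 by omega)] at h2
  rw [if_neg (show ¬ (j + 2 < p) by omega), if_neg (show ¬ (j + 2 = p) by omega),
    List.getElem?_append_right (show v.length ≤ j + 2 - p - 1 by omega)] at h3
  refine ⟨j, a, b, ?_, ?_, ?_, hax, hbx⟩
  · rw [H, if_neg (show ¬ (j < p + m) by omega), if_neg (show ¬ (j = p + m) by omega)]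
    rw [show j - (p + m) - 1 = j - p - 1 - v.length by omega]
    exact h1
  · rw [H, if_neg (show ¬ (j + 1 < p + m) by omega), if_neg (show ¬ (j + 1 = p + m) by omega)]
    rw [show j + 1 - (p + m) - 1 = j + 1 - p - 1 - v.length by omega]
    exact h2
  · rw [H, if_neg (show ¬ (j + 2 < p + m) by omega), if_neg (show ¬ (j + 2 = p + m) by omega)]
    rw [show j + 2 - (p + m) - 1 = j + 2 - p - 1 - v.length by omega]
    exact h3



lemma core (u v w : List ℕ) (y x : ℕ)
    (Hv : ∀ a ∈ v, a < y)
    (Hu : ∀ a ∈ u.getLast?, y < a)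
    (Hw : ∀ a ∈ w.head?, y < a) :
    IsPeak (u ++ y :: (v ++ w)) x ↔ IsPeak ((u ++ v) ++ y :: w) x := by
  constructor
  · intro h
    rw [isPeak_iff_pk] at h ⊢
    exact core_fwd u v w y x Hv Hu Hw h
  · intro h
    rw [← isPeak_reverse] at h
    have e1 : ((u ++ v) ++ y :: w).reverse = w.reverse ++ y :: (v.reverse ++ u.reverse) := by
      simp
    rw [e1, isPeak_iff_pk] at h
    have h2 := core_fwd w.reverse v.reverse u.reverse y x
      (fun a ha => Hv a (List.mem_reverse.mp ha))
      (fun a ha => Hw a (by rwa [List.getLast?_reverse] at ha))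
      (fun a ha => Hu a (by rwa [List.head?_reverse] at ha)) h
    rw [← isPeak_iff_pk] at h2
    have e2 : (w.reverse ++ v.reverse) ++ y :: u.reverse = (u ++ y :: (v ++ w)).reverse := by
      simp
    rw [e2, isPeak_reverse] at h2
    exact h2

lemma head_dropWhile_gt (l2 : List ℕ) (y : ℕ) (hy : y ∉ l2) :
    ∀ a ∈ (l2.dropWhile (fun a => decide (a < y))).head?, y < a := by
  intro a ha
  have hne : l2.dropWhile (fun a => decide (a < y)) ≠ [] := by
    intro h
    rw [h] at ha
    simp at ha
  rw [List.head?_eq_head hne] at ha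
  have hval := Option.some.inj ha
  have hnlt := List.head_dropWhile_not (fun a => decide (a < y)) (l := l2) hne
  rw [hval] at hnlt
  have hmem : a ∈ l2 := by
    rw [← hval]
    exact (List.dropWhile_sublist _).subset (List.head_mem hne)
  have hay : a ≠ y := fun h => hy (h ▸ hmem)
  simp at hnlt
  omega

lemma hop_peak (l : List ℕ) (y : ℕ) (hnd : l.Nodup) (hy : y ∈ l) (x : ℕ) :
    IsPeak l x ↔ IsPeak (hop y l) x := by
  have hdw : l.dropWhile (fun a => decide (a ≠ y)) ≠ [] := by
    intro hemp
    have hmem : y ∈ l.takeWhile (fun a => decide (a ≠ y)) := by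
      conv at hy => rw [← List.takeWhile_append_dropWhile (p := fun a => decide (a ≠ y)) (l := l)]
      rwa [hemp, List.append_nil] at hy
    have := List.mem_takeWhile_imp hmem
    simp at this
  have hhead : (l.dropWhile (fun a => decide (a ≠ y))).head hdw = y := by
    have := List.head_dropWhile_not (fun a => decide (a ≠ y)) (l := l) hdw
    simpa using this
  set l1 := l.takeWhile (fun a => decide (a ≠ y)) with hl1
  set l2 := (l.dropWhile (fun a => decide (a ≠ y))).tail with hl2
  have hsplit : l = l1 ++ y :: l2 := by
    have h := List.cons_head_tail (l := l.dropWhile (fun a => decide (a ≠ y))) hdw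
    rw [hhead] at h
    conv_lhs => rw [← List.takeWhile_append_dropWhile (p := fun a => decide (a ≠ y)) (l := l), ← h]
  set w2 := (l1.reverse.takeWhile (fun a => decide (a < y))).reverse with hw2
  set w1 := (l1.reverse.dropWhile (fun a => decide (a < y))).reverse with hw1
  set w4 := l2.takeWhile (fun a => decide (a < y)) with hw4
  set w5 := l2.dropWhile (fun a => decide (a < y)) with hw5
  have hl1e : l1 = w1 ++ w2 := by
    rw [hw1, hw2, ← List.reverse_append, List.takeWhile_append_dropWhile, List.reverse_reverse]
  have hl2e : l2 = w4 ++ w5 := List.takeWhile_append_dropWhile.symm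
  have hyl1 : y ∉ l1 := fun hmem => by simpa using List.mem_takeWhile_imp hmem
  have hyl2 : y ∉ l2 := by
    intro hmem
    rw [hsplit, List.nodup_append] at hnd
    exact ((List.nodup_cons.mp hnd.2.1).1) hmem
  have Hw2 : ∀ a ∈ w2, a < y := by
    intro a ha
    rw [hw2, List.mem_reverse] at ha
    simpa using List.mem_takeWhile_imp ha
  have Hw4 : ∀ a ∈ w4, a < y := by
    intro a ha
    rw [hw4] at ha
    simpa using List.mem_takeWhile_imp ha
  have Hw1 : ∀ a ∈ w1.getLast?, y < a := by
    intro a ha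
    rw [hw1, List.getLast?_reverse] at ha
    exact head_dropWhile_gt l1.reverse y (by simpa using hyl1) a ha
  have Hw5 : ∀ a ∈ w5.head?, y < a := by
    intro a ha
    rw [hw5] at ha
    exact head_dropWhile_gt l2 y hyl2 a ha
  have hhop : hop y l = if (w2 = [] ∧ w4 ≠ []) ∨ (w2 ≠ [] ∧ w4 = []) then
      w1 ++ w4 ++ y :: w2 ++ w5 else l := by
    simp only [hop, if_pos hy]
    rfl
  rw [hhop]
  by_cases hc : (w2 = [] ∧ w4 ≠ []) ∨ (w2 ≠ [] ∧ w4 = [])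
  · rw [if_pos hc]
    rcases hc with ⟨h2e, _⟩ | ⟨_, h4e⟩
    · have el : l = w1 ++ y :: (w4 ++ w5) := by
        rw [hsplit, hl1e, h2e, List.append_nil, hl2e]
      have er : w1 ++ w4 ++ y :: w2 ++ w5 = (w1 ++ w4) ++ y :: w5 := by
        rw [h2e]; simp
      rw [el, er]
      exact core w1 w4 w5 y x Hw4 Hw1 Hw5
    · have el : l = (w1 ++ w2) ++ y :: w5 := by
        rw [hsplit, hl1e, hl2e, h4e, List.nil_append, List.append_assoc]
      have er : w1 ++ w4 ++ y :: w2 ++ w5 = w1 ++ y :: (w2 ++ w5) := by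
        rw [h4e]; simp
      rw [el, er]
      exact (core w1 w2 w5 y x Hw2 Hw1 Hw5).symm
  · rw [if_neg hc]

/-- Valley-hopping preserves peaks: `x` is a peak of `π` iff `x` is a peak of `φ_y(π)`. -/
theorem stmt_10 (n : ℕ) (l : List ℕ) (hl : l.Perm (List.range' 1 n))
    (x y : ℕ) (hx : x ∈ l) (hy : y ∈ l) :
    IsPeak l x ↔ IsPeak (hop y l) x := by
  have hnd : l.Nodup := hl.nodup_iff.mpr (List.nodup_range' (s := 1) (n := n))
  exact hop_peak l y hnd hy x

end DMTCS
end

section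
/- For every permutation π ∈ S_n, des(π) + des(φ_x(π)) changes as follows: if x is a double ascent of π then des(φ_x(π)) = des(π) + 1, and if x is a double descent of π then des(φ_x(π)) = des(π) − 1; otherwise des(φ_x(π)) = des(π). -/
namespace DMTCS

/-- The number of descents of the word `l`. -/
def desL (l : List ℕ) : ℕ :=
  ((List.range (l.length - 1)).filter (fun i => decide (l.getD (i + 1) 0 < l.getD i 0))).length

def B (o₁ o₂ : Option ℕ) : ℕ :=
  match o₁, o₂ with | some c, some d => if d < c then 1 else 0 | _, _ => 0

lemma desL_cons (c : ℕ) (l : List ℕ) : desL (c :: l) = B (some c) l.head? + desL l := by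
  cases l with
  | nil => simp [desL, B]
  | cons d t =>
    simp only [desL, B, List.head?_cons]
    simp only [List.length_cons, Nat.add_sub_cancel, List.range_succ_eq_map,
      List.filter_cons, List.filter_map, List.length_cons]
    have he : ((fun i => decide ((c::d::t).getD (i + 1) 0 < (c::d::t).getD i 0)) ∘ Nat.succ)
        = fun i => decide ((d::t).getD (i + 1) 0 < (d::t).getD i 0) := by
      funext i; simp [Function.comp, List.getD_cons_succ]
    rw [he]
    rcases Nat.lt_or_ge d c with h | h <;>
      simp [List.getD_cons_succ, List.getD_cons_zero, h, Nat.not_lt.2 h, Nat.add_comm]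

lemma desL_append (a : List ℕ) (b : ℕ) (t : List ℕ) :
    desL (a ++ b :: t) = desL a + B a.getLast? (some b) + desL (b :: t) := by
  induction a with
  | nil => simp [desL, B]
  | cons c a ih =>
    rw [List.cons_append, desL_cons, ih, desL_cons]
    cases a with
    | nil => simp [B, desL]
    | cons d a' =>
      rw [desL_cons c (d :: a')]
      have : (d :: a' ++ b :: t).head? = some d := rfl
      rw [this]
      rw [List.getLast?_cons_cons]
      have h2 : (d :: a').head? = some d := rfl
      rw [h2]
      simp only [B]
      omega

lemma key_s11 (x v : ℕ) (w1 w2 w5 : List ℕ)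
    (h2 : ∀ y ∈ v :: w2, y < x)
    (h1 : ∀ c, w1.getLast? = some c → x < c)
    (h5 : ∀ c, w5.head? = some c → x < c) :
    desL (w1 ++ x :: ((v :: w2) ++ w5)) = desL (w1 ++ v :: (w2 ++ x :: w5)) + 1 := by
  have hvx : v < x := h2 v (List.mem_cons_self (a := v) (l := w2))
  have hB1 : B w1.getLast? (some v) = B w1.getLast? (some x) := by
    cases hgl : w1.getLast? with
    | none => rfl
    | some c =>
      have hc := h1 c hgl
      simp [B, show v < c by omega, show x < c by omega]
  have hlast2 : ∃ c, (v :: w2).getLast? = some c ∧ c < x := by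
    have hne : (v :: w2) ≠ [] := by simp
    refine ⟨(v :: w2).getLast hne, List.getLast?_eq_getLast hne, ?_⟩
    exact h2 _ (List.getLast_mem hne)
  obtain ⟨c2, hc2, hc2x⟩ := hlast2
  have hM : desL (v :: w2 ++ w5) = desL (v :: w2) + desL w5 := by
    cases w5 with
    | nil => simp [desL]
    | cons h t =>
      have hhx := h5 h rfl
      rw [show (v :: w2 ++ h :: t) = ((v :: w2) ++ h :: t) by simp,
        desL_append, hc2]
      simp [B, show ¬ h < c2 by omega]
  have hx5 : B (some x) w5.head? = 0 := by
    cases hh : w5.head? with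
    | none => rfl
    | some h => have := h5 h hh; simp [B]; omega
  have hR : desL ((v :: w2) ++ x :: w5) = desL (v :: w2) + desL w5 := by
    rw [desL_append, hc2, desL_cons x w5, hx5]
    simp [B, show ¬ x < c2 by omega]
  rw [desL_append w1 x ((v :: w2) ++ w5), desL_cons x ((v :: w2) ++ w5),
    desL_append w1 v (w2 ++ x :: w5)]
  have hh : ((v :: w2) ++ w5).head? = some v := rfl
  rw [hh, hM]
  rw [show desL (v :: (w2 ++ x :: w5)) = desL ((v :: w2) ++ x :: w5) from rfl, hR, ← hB1]
  simp [B, hvx]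
  ring


/-- If `x` is a double ascent of `π` then `des(φ_x(π)) = des(π) + 1`; if `x` is a double
descent then `des(φ_x(π)) = des(π) − 1`; otherwise `des(φ_x(π)) = des(π)`. -/
theorem stmt_11 (n : ℕ) (l : List ℕ) (hl : l.Perm (List.range' 1 n)) (x : ℕ) (hx : x ∈ l) :
    (IsDblAsc l x → desL (hop x l) = desL l + 1) ∧
    (IsDblDes l x → desL (hop x l) + 1 = desL l) ∧
    (¬IsDblAsc l x ∧ ¬IsDblDes l x → desL (hop x l) = desL l) := by
  classical
  have hnd : l.Nodup := hl.symm.nodup (List.nodup_range' (s := 1) (n := n))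
  obtain ⟨l1, hl1⟩ : ∃ l1, l1 = l.takeWhile (fun a => decide (a ≠ x)) := ⟨_, rfl⟩
  obtain ⟨l2, hl2⟩ : ∃ l2, l2 = (l.dropWhile (fun a => decide (a ≠ x))).tail := ⟨_, rfl⟩
  obtain ⟨w2, hw2⟩ : ∃ w2, w2 = (l1.reverse.takeWhile (fun a => decide (a < x))).reverse :=
    ⟨_, rfl⟩
  obtain ⟨w1, hw1⟩ : ∃ w1, w1 = (l1.reverse.dropWhile (fun a => decide (a < x))).reverse :=
    ⟨_, rfl⟩
  obtain ⟨w4, hw4⟩ : ∃ w4, w4 = l2.takeWhile (fun a => decide (a < x)) := ⟨_, rfl⟩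
  obtain ⟨w5, hw5⟩ : ∃ w5, w5 = l2.dropWhile (fun a => decide (a < x)) := ⟨_, rfl⟩
  have hxl1 : x ∉ l1 := by
    intro h
    rw [hl1] at h
    have := List.mem_takeWhile_imp h
    simp at this
  have hdrop : l.dropWhile (fun a => decide (a ≠ x)) = x :: l2 := by
    have hne : l.dropWhile (fun a => decide (a ≠ x)) ≠ [] := by
      intro h
      have h2 := List.takeWhile_append_dropWhile (p := fun a => decide (a ≠ x)) (l := l)
      rw [h, List.append_nil] at h2
      exact hxl1 (by rw [hl1, h2]; exact hx)
    have hh := List.head?_dropWhile_not (fun a => decide (a ≠ x)) l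
    cases hdw : l.dropWhile (fun a => decide (a ≠ x)) with
    | nil => exact absurd hdw hne
    | cons h t =>
      rw [hdw] at hh
      simp at hh
      rw [hl2, hdw, hh]
      rfl
  have hsplit : l = l1 ++ x :: l2 := by
    conv_lhs => rw [← List.takeWhile_append_dropWhile (p := fun a => decide (a ≠ x)) (l := l)]
    rw [hdrop, hl1]
  have hxl2 : x ∉ l2 := by
    have h2 : (x :: l2).Nodup := (hsplit ▸ hnd).of_append_right
    exact (List.nodup_cons.mp h2).1
  have hl1w : w1 ++ w2 = l1 := by
    rw [hw1, hw2, ← List.reverse_append, List.takeWhile_append_dropWhile, List.reverse_reverse]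
  have hl2w : w4 ++ w5 = l2 := by rw [hw4, hw5]; exact List.takeWhile_append_dropWhile
  have hw2lt : ∀ y ∈ w2, y < x := by
    intro y hy
    rw [hw2, List.mem_reverse] at hy
    have := List.mem_takeWhile_imp hy; simpa using this
  have hw4lt : ∀ y ∈ w4, y < x := by
    intro y hy
    rw [hw4] at hy
    have := List.mem_takeWhile_imp hy; simpa using this
  have hw1last : ∀ c, w1.getLast? = some c → x < c := by
    intro c hc
    rw [hw1, List.getLast?_reverse] at hc
    have h1 := List.head?_dropWhile_not (fun a => decide (a < x)) l1.reverse
    rw [hc] at h1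
    have hcx : ¬ c < x := by simpa using h1
    have hmem : c ∈ l1 := by
      have h2 : c ∈ l1.reverse.dropWhile (fun a => decide (a < x)) :=
        List.mem_of_mem_head? (by rw [hc]; rfl)
      exact List.mem_reverse.mp ((List.dropWhile_sublist _).subset h2)
    have : c ≠ x := fun h => hxl1 (h ▸ hmem)
    omega
  have hw5head : ∀ c, w5.head? = some c → x < c := by
    intro c hc
    rw [hw5] at hc
    have h1 := List.head?_dropWhile_not (fun a => decide (a < x)) l2
    rw [hc] at h1
    have hcx : ¬ c < x := by simpa using h1
    have hmem : c ∈ l2 := by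
      have h2 : c ∈ l2.dropWhile (fun a => decide (a < x)) :=
        List.mem_of_mem_head? (by rw [hc]; rfl)
      exact (List.dropWhile_sublist _).subset h2
    have : c ≠ x := fun h => hxl2 (h ▸ hmem)
    omega
  have hLen : l.length = l1.length + l2.length + 1 := by
    rw [hsplit]; simp [List.length_append]; omega
  have hgetm : l[l1.length]'(by omega) = x := by
    rw [List.getElem_of_eq hsplit, List.getElem_append_right (le_refl l1.length)]
    simp
  have hA : entry l (l1.length + 1) = (x : WithTop ℕ) := by
    rw [entry, dif_pos ⟨by omega, by omega⟩]
    simp only [List.get_eq_getElem, Nat.add_sub_cancel]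
    exact congrArg (fun y : ℕ => (y : WithTop ℕ)) hgetm
  have hB' : ∀ i, 1 ≤ i → i ≤ l.length → entry l i = (x : WithTop ℕ) → i = l1.length + 1 := by
    intro i h1 h2 hix
    rw [entry, dif_pos ⟨h1, h2⟩] at hix
    simp only [List.get_eq_getElem] at hix
    have hx' : l[i-1]'(by omega) = x := by exact_mod_cast hix
    have := hnd.getElem_inj_iff.mp (hx'.trans hgetm.symm)
    omega
  have hEm : (l1 = [] ∧ entry l l1.length = ⊤) ∨
      ∃ (a : List ℕ) (c : ℕ), l1 = a ++ [c] ∧ entry l l1.length = (c : WithTop ℕ) ∧ c ≠ x := by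
    rcases List.eq_nil_or_concat l1 with h | ⟨a, c, h⟩
    · left
      refine ⟨h, ?_⟩
      rw [entry, dif_neg]
      simp [h]
    · rw [List.concat_eq_append] at h
      right
      have hlen1 : l1.length = a.length + 1 := by rw [h]; simp
      refine ⟨a, c, h, ?_, ?_⟩
      · rw [entry, dif_pos ⟨by omega, by omega⟩]
        simp only [List.get_eq_getElem]
        have : l[l1.length - 1]'(by omega) = c := by
          rw [List.getElem_of_eq hsplit, List.getElem_append_left (by omega),
            List.getElem_of_eq h]
          exact List.getElem_concat_length (by omega) _
        exact congrArg (fun y : ℕ => (y : WithTop ℕ)) this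
      · intro hcx
        exact hxl1 (by rw [h, hcx]; simp)
  have hEm2 : (l2 = [] ∧ entry l (l1.length + 1 + 1) = ⊤) ∨
      ∃ (c : ℕ) (t : List ℕ), l2 = c :: t ∧ entry l (l1.length + 1 + 1) = (c : WithTop ℕ) ∧ c ≠ x := by
    rcases hl2e : l2 with _ | ⟨c, t⟩
    · left
      refine ⟨rfl, ?_⟩
      rw [entry, dif_neg]
      rw [hLen, hl2e]
      simp only [List.length_nil]
      omega
    · right
      refine ⟨c, t, rfl, ?_, ?_⟩
      · rw [entry, dif_pos ⟨by omega, by rw [hLen, hl2e]; simp only [List.length_cons]; omega⟩]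
        simp only [List.get_eq_getElem]
        have hgc2 : ∀ (j : ℕ) (hj : j < (x :: l2).length), j = 1 → (x :: l2)[j]'hj = c := by
          rintro j hj rfl
          rw [List.getElem_of_eq (show (x :: l2) = (x :: c :: t) by rw [hl2e])]
          rfl
        have hgc : ∀ (i : ℕ) (hi : i < l.length), i = l1.length + 1 + 1 - 1 → l[i]'hi = c := by
          rintro i hi hieq
          rw [List.getElem_of_eq hsplit, List.getElem_append_right (by omega)]
          exact hgc2 _ _ (by omega)
        exact congrArg (fun y : ℕ => (y : WithTop ℕ)) (hgc _ _ rfl)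
      · intro hcx
        exact hxl2 (by rw [hl2e, hcx]; simp)
  have hw2nil' : l1 = [] → w2 = [] := by intro h; rw [hw2, h]; rfl
  have hw2c : ∀ a c, l1 = a ++ [c] → (w2 = [] ↔ ¬ c < x) := by
    intro a c h
    rw [hw2, List.reverse_eq_nil_iff, h, List.reverse_append]
    simp only [List.reverse_singleton, List.singleton_append, List.takeWhile_cons]
    by_cases hc : c < x <;> simp [hc]
  have hw4nil' : l2 = [] → w4 = [] := by intro h; rw [hw4, h]; rfl
  have hw4c : ∀ c t, l2 = c :: t → (w4 = [] ↔ ¬ c < x) := by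
    intro c t h
    rw [hw4, h, List.takeWhile_cons]
    by_cases hc : c < x <;> simp [hc]
  have hCm : entry l l1.length < (x : WithTop ℕ) ↔ w2 ≠ [] := by
    rcases hEm with ⟨h0, he⟩ | ⟨a, c, hc, he, hcx⟩
    · rw [he]; simp [hw2nil' h0]
    · rw [he]
      have h1 := hw2c a c hc
      constructor
      · intro h hnil; exact (h1.mp hnil) (by exact_mod_cast h)
      · intro h
        by_contra h2
        exact h (h1.mpr (fun h3 => h2 (by exact_mod_cast h3)))
  have hCm' : (x : WithTop ℕ) < entry l l1.length ↔ w2 = [] := by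
    rcases hEm with ⟨h0, he⟩ | ⟨a, c, hc, he, hcx⟩
    · rw [he]; simp [hw2nil' h0]
    · rw [he]
      have h1 := hw2c a c hc
      constructor
      · intro h
        have hxc : x < c := by exact_mod_cast h
        exact h1.mpr (by omega)
      · intro h
        have h2 := h1.mp h
        have : x < c := by omega
        exact_mod_cast this
  have hDm : (x : WithTop ℕ) < entry l (l1.length + 1 + 1) ↔ w4 = [] := by
    rcases hEm2 with ⟨h0, he⟩ | ⟨c, t, hc, he, hcx⟩
    · rw [he]; simp [hw4nil' h0]
    · rw [he]
      have h1 := hw4c c t hc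
      constructor
      · intro h
        have : x < c := by exact_mod_cast h
        exact h1.mpr (by omega)
      · intro h
        have h2 := h1.mp h
        have : x < c := by omega
        exact_mod_cast this
  have hDm' : entry l (l1.length + 1 + 1) < (x : WithTop ℕ) ↔ w4 ≠ [] := by
    rcases hEm2 with ⟨h0, he⟩ | ⟨c, t, hc, he, hcx⟩
    · rw [he]; simp [hw4nil' h0]
    · rw [he]
      have h1 := hw4c c t hc
      constructor
      · intro h hnil; exact (h1.mp hnil) (by exact_mod_cast h)
      · intro h
        by_contra h2
        exact h (h1.mpr (fun h3 => h2 (by exact_mod_cast h3)))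
  have hasc : IsDblAsc l x ↔ (w2 ≠ [] ∧ w4 = []) := by
    constructor
    · rintro ⟨i, h1, h2, hix, hlt1, hlt2⟩
      have hi := hB' i h1 h2 hix
      subst hi
      rw [hix] at hlt1 hlt2
      rw [Nat.add_sub_cancel] at hlt1
      exact ⟨hCm.mp hlt1, hDm.mp hlt2⟩
    · rintro ⟨h2, h4⟩
      refine ⟨l1.length + 1, by omega, by omega, hA, ?_, ?_⟩
      · rw [hA, Nat.add_sub_cancel]; exact hCm.mpr h2
      · rw [hA]; exact hDm.mpr h4
  have hdes : IsDblDes l x ↔ (w2 = [] ∧ w4 ≠ []) := by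
    constructor
    · rintro ⟨i, h1, h2, hix, hlt1, hlt2⟩
      have hi := hB' i h1 h2 hix
      subst hi
      rw [hix] at hlt1 hlt2
      rw [Nat.add_sub_cancel] at hlt2
      exact ⟨hCm'.mp hlt2, hDm'.mp hlt1⟩
    · rintro ⟨h2, h4⟩
      refine ⟨l1.length + 1, by omega, by omega, hA, ?_, ?_⟩
      · rw [hA]; exact hDm'.mpr h4
      · rw [hA, Nat.add_sub_cancel]; exact hCm'.mpr h2
  have hhop : hop x l = if (w2 = [] ∧ w4 ≠ []) ∨ (w2 ≠ [] ∧ w4 = []) then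
      w1 ++ w4 ++ x :: w2 ++ w5 else l := by
    simp only [hop]
    rw [if_pos hx, ← hl1, ← hl2, ← hw2, ← hw1, ← hw4, ← hw5]
  refine ⟨?_, ?_, ?_⟩
  · intro hA'
    obtain ⟨h2ne, h4nil⟩ := hasc.mp hA'
    obtain ⟨v, w2', hv⟩ := List.exists_cons_of_ne_nil h2ne
    have h5l2 : w5 = l2 := by rw [← hl2w, h4nil, List.nil_append]
    have hhop2 : hop x l = w1 ++ x :: ((v :: w2') ++ l2) := by
      rw [hhop, if_pos (Or.inr ⟨h2ne, h4nil⟩), h4nil, h5l2, hv]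
      simp [List.append_assoc]
    have hl' : l = w1 ++ v :: (w2' ++ x :: l2) := by
      rw [hsplit, ← hl1w, hv]
      simp [List.append_assoc]
    rw [hhop2, hl']
    exact key_s11 x v w1 w2' l2 (by rw [← hv]; exact hw2lt) hw1last
      (fun c hc => hw5head c (by rw [h5l2]; exact hc))
  · intro hD'
    obtain ⟨h2nil, h4ne⟩ := hdes.mp hD'
    obtain ⟨v, w4', hv⟩ := List.exists_cons_of_ne_nil h4ne
    have h1l1 : w1 = l1 := by rw [← hl1w, h2nil, List.append_nil]
    have hhop2 : hop x l = w1 ++ v :: (w4' ++ x :: w5) := by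
      rw [hhop, if_pos (Or.inl ⟨h2nil, h4ne⟩), h2nil, hv]
      simp [List.append_assoc]
    have hl' : l = w1 ++ x :: ((v :: w4') ++ w5) := by
      rw [hsplit, ← h1l1, ← hl2w, hv]
    rw [hhop2, hl']
    exact (key_s11 x v w1 w4' w5 (by rw [← hv]; exact hw4lt) hw1last hw5head).symm
  · rintro ⟨hnA, hnD⟩
    rw [hhop, if_neg]
    rintro (h | h)
    · exact hnD (hdes.mpr h)
    · exact hnA (hasc.mpr h)


end DMTCS
end

section
/- Every permutation π ∈ S_n can be written uniquely as a concatenation π = α_1 ⋯ α_k β of nonempty factors, where for each i the last letter of α_i is the largest letter of α_i and is a descent of π, each α_i has length at least 2, and β is determined by the algorithm: repeatedly, if the remaining word w is increasing or the largest descent of w is its first letter, set β = w; otherwise split w = w' x w'' where x is the largest descent of w, set α_i = w' x, and continue with w''. (This is the rix-factorization.) -/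
namespace DMTCS

/-- `d` is a descent letter of `l`: some occurrence of `d` is immediately followed by a
smaller letter. -/
def IsDescentOf (l : List ℕ) (d : ℕ) : Prop :=
  ∃ i, i + 1 < l.length ∧ l.getD i 0 = d ∧ l.getD (i + 1) 0 < d

/-- `(αs, β)` is a rix-factorization of `l`: the factors concatenate to `l`; each α-factor
has length at least 2, ends with its largest letter `x`, which is a descent of `l` and is
the largest descent of `l` occurring in the remaining word (that α-factor and everything
after it); and `β` is either increasing or its first letter is the largest descent of `l`
occurring in `β`. -/
def IsRixFact (l : List ℕ) (αs : List (List ℕ)) (β : List ℕ) : Prop :=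
  l = αs.flatten ++ β ∧
  (∀ (j : ℕ) (hj : j < αs.length),
    2 ≤ (αs.get ⟨j, hj⟩).length ∧
    ∃ x, (αs.get ⟨j, hj⟩).getLast? = some x ∧
      (∀ a ∈ αs.get ⟨j, hj⟩, a ≤ x) ∧ IsDescentOf l x ∧
      (∀ d, IsDescentOf l d → d ∈ (αs.drop j).flatten ++ β → d ≤ x)) ∧
  (List.Pairwise (· < ·) β ∨
    ∃ x, β.head? = some x ∧ IsDescentOf l x ∧
      ∀ d, IsDescentOf l d → d ∈ β → d ≤ x)

lemma descent_mem {l : List ℕ} {d : ℕ} (h : IsDescentOf l d) : d ∈ l := by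
  obtain ⟨i, hi, h1, h2⟩ := h
  rw [List.getD_eq_getElem l 0 (by omega)] at h1
  exact h1 ▸ List.getElem_mem _

lemma descent_suffix {u v : List ℕ} (hnd : (u ++ v).Nodup) (d : ℕ) :
    IsDescentOf v d ↔ IsDescentOf (u ++ v) d ∧ d ∈ v := by
  constructor
  · rintro ⟨i, hi, h1, h2⟩
    have hmem : d ∈ v := by
      rw [List.getD_eq_getElem v 0 (by omega)] at h1; exact h1 ▸ List.getElem_mem _
    refine ⟨⟨u.length + i, by simp; omega, ?_, ?_⟩, hmem⟩
    · rw [List.getD_append_right u v 0 _ (by omega)]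
      simpa using h1
    · rw [show u.length + i + 1 = u.length + (i+1) by omega,
        List.getD_append_right u v 0 _ (by omega)]
      simpa using h2
  · rintro ⟨⟨i, hi, h1, h2⟩, hmem⟩
    simp only [List.length_append] at hi
    obtain ⟨j, hj, hvj⟩ := List.mem_iff_getElem.mp hmem
    have hieq : i = u.length + j := by
      have e1 : (u ++ v)[i]'(by simp; omega) = d := by
        rw [← List.getD_eq_getElem _ 0]; exact h1
      have e2 : (u ++ v)[u.length + j]'(by simp; omega) = d := by
        rw [List.getElem_append_right (by omega)]; simpa using hvj
      have := (hnd.get_inj_iff (i := ⟨i, by simp; omega⟩)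
        (j := ⟨u.length + j, by simp; omega⟩)).mp
        (by simp only [List.get_eq_getElem]; rw [e1, e2])
      simpa using this
    refine ⟨j, by omega, ?_, ?_⟩
    · rw [List.getD_eq_getElem v 0 (by omega), hvj]
    · have := h2
      rw [show i + 1 = u.length + (j+1) by omega,
        List.getD_append_right u v 0 _ (by omega)] at this
      simpa using this

lemma before_max_le {l : List ℕ} {x : ℕ} (hmax : ∀ d, IsDescentOf l d → d ≤ x)
    {p : ℕ} (hp : p < l.length) (hx : l.getD p 0 = x) :
    ∀ i ≤ p, l.getD i 0 ≤ x := by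
  have key : ∀ k i, i + k = p → l.getD i 0 ≤ x := by
    intro k
    induction k with
    | zero =>
      intro i hi
      have : i = p := by omega
      subst this; rw [hx]
    | succ k ih =>
      intro i hi
      by_contra hgt
      push_neg at hgt
      have h1 : l.getD (i+1) 0 ≤ x := ih (i+1) (by omega)
      have hd : IsDescentOf l (l.getD i 0) := ⟨i, by omega, rfl, by omega⟩
      exact absurd (hmax _ hd) (by omega)
  intro i hi; exact key (p - i) i (by omega)

lemma nodescent_sorted {l : List ℕ} (hnd : l.Nodup) (h : ∀ d, ¬ IsDescentOf l d) :
    l.Pairwise (· < ·) := by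
  rw [← List.isChain_iff_pairwise, List.isChain_iff_getElem]
  intro i hi
  have hi' : i + 1 < l.length := by omega
  have h2 : ¬ l.getD (i+1) 0 < l.getD i 0 := fun hlt => h _ ⟨i, hi', rfl, hlt⟩
  have hne : l.get ⟨i, by omega⟩ ≠ l.get ⟨i+1, by omega⟩ := by
    intro he
    have := (hnd.get_inj_iff).mp he
    simp at this
  rw [List.getD_eq_getElem l 0 hi', List.getD_eq_getElem l 0 (show i < l.length by omega)] at h2
  simp only [List.get_eq_getElem] at hne ⊢
  omega

lemma sorted_nodescent {l : List ℕ} (h : l.Pairwise (· < ·)) (d : ℕ) : ¬ IsDescentOf l d := by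
  rintro ⟨i, hi, h1, h2⟩
  have := List.pairwise_iff_get.mp h ⟨i, by omega⟩ ⟨i+1, hi⟩ (by simp)
  rw [List.getD_eq_getElem l 0 (by omega)] at h1
  rw [List.getD_eq_getElem l 0 hi] at h2
  simp only [List.get_eq_getElem] at this
  omega

lemma max_descent_exists {l : List ℕ} (h : ∃ d, IsDescentOf l d) :
    ∃ x, IsDescentOf l x ∧ ∀ d, IsDescentOf l d → d ≤ x := by
  classical
  obtain ⟨d0, hd0⟩ := h
  set S := l.toFinset.filter (fun d => IsDescentOf l d) with hS
  have hne : S.Nonempty := ⟨d0, by simp [hS, List.mem_toFinset.mpr (descent_mem hd0), hd0]⟩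
  refine ⟨S.max' hne, ?_, ?_⟩
  · have := S.max'_mem hne
    simp only [hS, Finset.mem_filter] at this
    exact this.2
  · intro d hd
    exact S.le_max' d (by simp [hS, List.mem_toFinset.mpr (descent_mem hd), hd])

lemma split_unique {a b c e : List ℕ} {x : ℕ} (hnd : (a ++ x :: b).Nodup)
    (h : a ++ x :: b = c ++ x :: e) : a = c ∧ b = e := by
  have hL : (a ++ x :: b).length = (c ++ x :: e).length := by rw [h]
  simp only [List.length_append, List.length_cons] at hL
  have hlen : a.length = c.length := by
    have e1 : (a ++ x :: b)[a.length]'(by simp) = x := by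
      rw [List.getElem_append_right le_rfl]; simp
    have e2 : (a ++ x :: b)[c.length]'(by simp; omega) = x := by
      rw [List.getElem_of_eq h, List.getElem_append_right le_rfl]; simp
    have := (hnd.get_inj_iff (i := ⟨a.length, by simp⟩)
      (j := ⟨c.length, by simp; omega⟩)).mp
      (by simp only [List.get_eq_getElem]; rw [e1, e2])
    simpa using this
  obtain ⟨h1, h2⟩ := List.append_inj h hlen
  exact ⟨h1, by simpa using h2⟩

lemma mem_drop_flatten {αs : List (List ℕ)} {β : List ℕ} {j d : ℕ}
    (h : d ∈ (αs.drop j).flatten ++ β) : d ∈ αs.flatten ++ β := by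
  simp only [List.mem_append, List.mem_flatten] at h ⊢
  rcases h with ⟨t, ht, hd⟩ | h
  · exact Or.inl ⟨t, List.mem_of_mem_drop ht, hd⟩
  · exact Or.inr h

lemma rix_beta_only (l : List ℕ) (hnd : l.Nodup)
    (h : (∀ d, ¬ IsDescentOf l d) ∨
      (∃ x, l.head? = some x ∧ IsDescentOf l x ∧ ∀ d, IsDescentOf l d → d ≤ x)) :
    ∃! p : List (List ℕ) × List ℕ, IsRixFact l p.1 p.2 := by
  refine ⟨([], l), ⟨by simp, by simp, ?_⟩, ?_⟩
  · rcases h with h | ⟨x, hhd, hxd, hmax⟩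
    · exact Or.inl (nodescent_sorted hnd h)
    · exact Or.inr ⟨x, hhd, hxd, fun d hd _ => hmax d hd⟩
  · rintro ⟨αs, β⟩ ⟨hflat, hα, hβ⟩
    have hαnil : αs = [] := by
      cases αs with
      | nil => rfl
      | cons α rest =>
        exfalso
        obtain ⟨hlen2, x₁, hlast, hle, hx₁d, hmax₁⟩ := hα 0 (by simp)
        have hlen2' : 2 ≤ α.length := hlen2
        have hlast' : α.getLast? = some x₁ := hlast
        have hmax₁' : ∀ d, IsDescentOf l d → d ∈ (α :: rest).flatten ++ β → d ≤ x₁ := hmax₁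
        have hflat' : l = (α :: rest).flatten ++ β := hflat
        rcases h with h | ⟨x, hhd, hxd, hmax⟩
        · exact h _ hx₁d
        · have hx₁x : x₁ = x := le_antisymm (hmax _ hx₁d)
            (hmax₁' x hxd (hflat' ▸ descent_mem hxd))
          obtain ⟨a, ha⟩ := List.getLast?_eq_some_iff.mp hlast'
          have hane : a ≠ [] := by
            rintro rfl
            simp [ha] at hlen2'
          obtain ⟨a0, a', rfl⟩ := List.exists_cons_of_ne_nil hane
          have hl2 : l = a0 :: (a' ++ x :: (rest.flatten ++ β)) := by
            rw [hflat']
            simp [ha, hx₁x]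
          have ha0 : a0 = x := by
            rw [hl2] at hhd
            simpa using hhd
          have hnd2 := hl2 ▸ hnd
          rw [List.nodup_cons] at hnd2
          exact hnd2.1 (ha0 ▸ (by simp : x ∈ a' ++ x :: (rest.flatten ++ β)))
    subst hαnil
    simp only [List.flatten_nil, List.nil_append] at hflat
    simp [hflat]

lemma transfer {l w' w'' : List ℕ} {x : ℕ} (hnd : l.Nodup) (hl : l = w' ++ x :: w'')
    (hxd : IsDescentOf l x) (hmax : ∀ d, IsDescentOf l d → d ≤ x) (hw' : w' ≠ [])
    (αs : List (List ℕ)) (β : List ℕ) :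
    IsRixFact l ((w' ++ [x]) :: αs) β ↔ IsRixFact w'' αs β := by
  have hl' : l = (w' ++ [x]) ++ w'' := by simp [hl]
  have hndsplit : ((w' ++ [x]) ++ w'').Nodup := hl' ▸ hnd
  have equiv : ∀ d, IsDescentOf w'' d ↔ (IsDescentOf l d ∧ d ∈ w'') := by
    intro d
    rw [descent_suffix hndsplit d, ← hl']
  constructor
  · rintro ⟨hflat, hα, hβ⟩
    have hflat' : l = (w' ++ [x]) ++ (αs.flatten ++ β) := by simpa using hflat
    have hw''eq : w'' = αs.flatten ++ β :=
      List.append_cancel_left (hl'.symm.trans hflat')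
    refine ⟨hw''eq, ?_, ?_⟩
    · intro j hj
      obtain ⟨h1, xj, h2, h3, h4, h5⟩ := hα (j+1) (by simpa using Nat.succ_lt_succ hj)
      have h1' : 2 ≤ (αs.get ⟨j, hj⟩).length := h1
      have h2' : (αs.get ⟨j, hj⟩).getLast? = some xj := h2
      have h3' : ∀ a ∈ αs.get ⟨j, hj⟩, a ≤ xj := h3
      have h5' : ∀ d, IsDescentOf l d → d ∈ (αs.drop j).flatten ++ β → d ≤ xj := h5
      have hxjmem : xj ∈ w'' := by
        rw [hw''eq]
        have hxa : xj ∈ αs.get ⟨j, hj⟩ := by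
          obtain ⟨a, ha⟩ := List.getLast?_eq_some_iff.mp h2'
          rw [ha]; simp
        exact List.mem_append_left _
          (List.mem_flatten.mpr ⟨_, List.get_mem αs ⟨j, hj⟩, hxa⟩)
      exact ⟨h1', xj, h2', h3', (equiv xj).mpr ⟨h4, hxjmem⟩,
        fun d hd hm => h5' d ((equiv d).mp hd).1 hm⟩
    · rcases hβ with hs | ⟨xb, hh, hbd, hbm⟩
      · exact Or.inl hs
      · have hxbβ : xb ∈ β := List.mem_of_mem_head? (by simp [hh])
        refine Or.inr ⟨xb, hh, (equiv xb).mpr ⟨hbd, ?_⟩,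
          fun d hd hm => hbm d ((equiv d).mp hd).1 hm⟩
        rw [hw''eq]
        exact List.mem_append_right _ hxbβ
  · rintro ⟨hflat, hα, hβ⟩
    refine ⟨by simp [hl', hflat], ?_, ?_⟩
    · intro j hj
      cases j with
      | zero =>
        refine ⟨?_, x, ?_, ?_, hxd, fun d hd _ => hmax d hd⟩
        · show 2 ≤ (w' ++ [x]).length
          have := List.length_pos_iff.mpr hw'
          simp
          omega
        · show (w' ++ [x]).getLast? = some x
          simp
        · show ∀ a ∈ w' ++ [x], a ≤ x
          intro a hma
          rcases List.mem_append.mp hma with hma | hma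
          · obtain ⟨i, hi, hia⟩ := List.mem_iff_getElem.mp hma
            have hp : l.getD w'.length 0 = x := by
              rw [hl, List.getD_append_right _ _ _ _ le_rfl]
              simp
            have hle := before_max_le hmax (p := w'.length)
              (by rw [hl]; simp) hp i (le_of_lt hi)
            rw [hl, List.getD_append _ _ _ i (by omega),
              List.getD_eq_getElem w' 0 hi, hia] at hle
            exact hle
          · simp at hma
            omega
      | succ j =>
        have hj' : j < αs.length := by simpa using hj
        obtain ⟨h1, xj, h2, h3, h4, h5⟩ := hα j hj'
        have hd4 : IsDescentOf l xj := ((equiv xj).mp h4).1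
        refine ⟨h1, xj, h2, h3, hd4, fun d hd hm => ?_⟩
        have hm' : d ∈ (αs.drop j).flatten ++ β := hm
        have hdw : d ∈ w'' := by
          rw [hflat]
          exact mem_drop_flatten hm'
        exact h5 d ((equiv d).mpr ⟨hd, hdw⟩) hm'
    · rcases hβ with hs | ⟨xb, hh, hbd, hbm⟩
      · exact Or.inl hs
      · have hxbβ : xb ∈ β := List.mem_of_mem_head? (by simp [hh])
        refine Or.inr ⟨xb, hh, ((equiv xb).mp hbd).1, fun d hd hm => ?_⟩
        have hdw : d ∈ w'' := by
          rw [hflat]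
          exact List.mem_append_right _ hm
        exact hbm d ((equiv d).mpr ⟨hd, hdw⟩) hm


lemma rix_aux (N : ℕ) : ∀ l : List ℕ, l.length ≤ N → l.Nodup →
    ∃! p : List (List ℕ) × List ℕ, IsRixFact l p.1 p.2 := by
  induction N with
  | zero =>
    intro l hlen hnd
    refine rix_beta_only l hnd (Or.inl ?_)
    rintro d ⟨i, hi, -⟩
    omega
  | succ N ih =>
    intro l hlen hnd
    by_cases hdesc : ∃ d, IsDescentOf l d
    · obtain ⟨x, hxd, hmax⟩ := max_descent_exists hdesc
      by_cases hhead : l.head? = some x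
      · exact rix_beta_only l hnd (Or.inr ⟨x, hhead, hxd, hmax⟩)
      · obtain ⟨w', w'', hl⟩ := List.append_of_mem (descent_mem hxd)
        have hw' : w' ≠ [] := by
          rintro rfl
          rw [hl] at hhead
          simp at hhead
        have hlen'' : w''.length ≤ N := by
          rw [hl] at hlen
          simp only [List.length_append, List.length_cons] at hlen
          have := List.length_pos_iff.mpr hw'
          omega
        have hnd'' : w''.Nodup := by
          rw [hl, List.nodup_append] at hnd
          exact (List.nodup_cons.mp hnd.2.1).2
        obtain ⟨q, hq, huniq⟩ := ih w'' hlen'' hnd''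
        refine ⟨((w' ++ [x]) :: q.1, q.2), ?_, ?_⟩
        · exact (transfer hnd hl hxd hmax hw' q.1 q.2).mpr hq
        · rintro ⟨αs, β⟩ hfact
          obtain ⟨hflat, hα, hβ⟩ := hfact
          cases αs with
          | nil =>
            exfalso
            have hflat' : l = β := by simpa using hflat
            rcases hβ with hs | ⟨x₁, hh, hx₁, hm⟩
            · exact sorted_nodescent (hflat' ▸ hs) x hxd
            · have hx₁x : x₁ = x :=
                le_antisymm (hmax _ hx₁) (hm x hxd (hflat' ▸ descent_mem hxd))
              refine hhead ?_
              rw [hflat']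
              exact hx₁x ▸ hh
          | cons α rest =>
            obtain ⟨hlen2, x₁, hlast, hle, hx₁d, hmax₁⟩ := hα 0 (by simp)
            have hlast' : α.getLast? = some x₁ := hlast
            have hmax₁' : ∀ d, IsDescentOf l d → d ∈ (α :: rest).flatten ++ β → d ≤ x₁ := hmax₁
            have hflat' : l = (α :: rest).flatten ++ β := hflat
            have hx₁x : x₁ = x :=
              le_antisymm (hmax _ hx₁d) (hmax₁' x hxd (hflat' ▸ descent_mem hxd))
            obtain ⟨a, ha⟩ := List.getLast?_eq_some_iff.mp hlast'
            have hl2 : l = a ++ x :: (rest.flatten ++ β) := by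
              rw [hflat']
              simp [ha, hx₁x]
            have hsplit := split_unique (hl2 ▸ hnd) (hl2.symm.trans hl)
            have hα1 : α = w' ++ [x] := by rw [ha, hx₁x, hsplit.1]
            have hwfact : IsRixFact w'' rest β := by
              refine (transfer hnd hl hxd hmax hw' rest β).mp ?_
              rw [← hα1]
              exact ⟨hflat, hα, hβ⟩
            have hq' := huniq (rest, β) hwfact
            have h1 : rest = q.1 := congrArg Prod.fst hq'
            have h2 : β = q.2 := congrArg Prod.snd hq'
            simp only [Prod.mk.injEq]
            exact ⟨by rw [hα1, h1], h2⟩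
    · exact rix_beta_only l hnd (Or.inl (fun d hd => hdesc ⟨d, hd⟩))

/-- Every permutation of [n] admits a unique rix-factorization `π = α_1 ⋯ α_k β`. -/
theorem stmt_13 (n : ℕ) (l : List ℕ) (hl : l.Perm (List.range' 1 n)) :
    ∃! p : List (List ℕ) × List ℕ, IsRixFact l p.1 p.2 := by
  have hnd : l.Nodup := hl.nodup_iff.mpr (List.nodup_range' (s := 1) (n := n))
  exact rix_aux l.length l le_rfl hnd

end DMTCS
end

section
/- Let π have rix-factorization π = α_1 ⋯ α_k β and let β_1(π) be the first letter of β. If y is a rixed point of π, then y is a valley of π if y = β_1(π), and y is a double ascent of π otherwise. -/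
namespace DMTCS

/-- The rix-factorization algorithm of Lin and Zeng: returns the list of α-factors
and the final factor β. -/
def rixFact (l : List ℕ) : List (List ℕ) × List ℕ :=
  if h : l.length < 2 then ([], l)
  else
    let dvals := ((List.range (l.length - 1)).filter
      (fun i => decide (l.getD (i + 1) 0 < l.getD i 0))).map (fun i => l.getD i 0)
    if dvals = [] then ([], l)
    else
      let x := dvals.foldr max 0
      let p := l.idxOf x
      if p = 0 then ([], l)
      else
        have : (l.drop (p + 1)).length < l.length := by
          simp only [List.length_drop]; omega
        let r := rixFact (l.drop (p + 1))
        (l.take (p + 1) :: r.1, r.2)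
termination_by l.length

/-- `β₁(π)`, the first letter of the rix-factor `β`. -/
def beta1 (l : List ℕ) : ℕ := (rixFact l).2.headD 0

/-- `y` is a rixed point of `l`: it lies in the maximal increasing suffix of `l`
(equivalently, in some strictly increasing suffix) and is not smaller than `β₁(l)`. -/
def RixPt (l : List ℕ) (y : ℕ) : Prop :=
  (∃ t, t <:+ l ∧ List.Pairwise (· < ·) t ∧ y ∈ t) ∧ beta1 l ≤ y

lemma entry_succ (l : List ℕ) (i : ℕ) (h : i < l.length) :
    entry l (i + 1) = (l[i] : WithTop ℕ) := by
  unfold entry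
  rw [dif_pos ⟨by omega, by omega⟩]
  simp

lemma entry_zero (l : List ℕ) : entry l 0 = ⊤ := by
  unfold entry; rw [dif_neg]; omega

lemma entry_of_gt (l : List ℕ) (i : ℕ) (h : l.length < i) : entry l i = ⊤ := by
  unfold entry; rw [dif_neg]; omega

lemma rixpt_pos (l : List ℕ) (y : ℕ)
    (h : ∃ t, t <:+ l ∧ List.Pairwise (· < ·) t ∧ y ∈ t) :
    ∃ i, ∃ h' : i < l.length, l[i] = y ∧ List.Pairwise (· < ·) (l.drop i) := by
  obtain ⟨t, ⟨u, hu⟩, hs, hyt⟩ := h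
  obtain ⟨j, hj, hjy⟩ := List.getElem_of_mem hyt
  refine ⟨u.length + j, by rw [← hu]; simp; omega, ?_, ?_⟩
  · subst hu
    rw [List.getElem_append_right (by omega)]
    simpa using hjy
  · have hdrop : l.drop (u.length + j) = t.drop j := by
      rw [← hu, List.drop_append]
      simp
    rw [hdrop]
    exact hs.sublist (List.drop_sublist j t)

def dv (l : List ℕ) : List ℕ :=
  ((List.range (l.length - 1)).filter
      (fun i => decide (l.getD (i + 1) 0 < l.getD i 0))).map (fun i => l.getD i 0)

lemma dv_nil_of_short (l : List ℕ) (h : l.length < 2) : dv l = [] := by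
  unfold dv
  have : l.length - 1 = 0 := by omega
  simp [this]

lemma rixFact_of_dv_nil (l : List ℕ) (h : dv l = []) : rixFact l = ([], l) := by
  rw [rixFact]
  split
  · rfl
  · unfold dv at h
    simp only []
    rw [if_pos h]

lemma rixFact_of_p_zero (l : List ℕ) (h : dv l ≠ [])
    (hp : l.idxOf ((dv l).foldr max 0) = 0) : rixFact l = ([], l) := by
  rw [rixFact]
  split
  · rfl
  · unfold dv at h hp
    simp only []
    rw [if_neg h, if_pos hp]

lemma rixFact_rec (l : List ℕ) (h : dv l ≠ [])
    (hp : l.idxOf ((dv l).foldr max 0) ≠ 0) :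
    (rixFact l).2 = (rixFact (l.drop (l.idxOf ((dv l).foldr max 0) + 1))).2 := by
  rw [rixFact]
  split
  · exact absurd (dv_nil_of_short l ‹_›) h
  · unfold dv at h hp ⊢
    simp only []
    rw [if_neg h, if_neg hp]

lemma getD_eq (l : List ℕ) (i : ℕ) (h : i < l.length) : l.getD i 0 = l[i] := by
  simp [List.getD_eq_getElem?_getD, List.getElem?_eq_getElem h]

lemma mem_dv (l : List ℕ) (a : ℕ) :
    a ∈ dv l ↔ ∃ i, ∃ h : i + 1 < l.length, l[i] = a ∧ l[i+1] < l[i] := by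
  unfold dv
  simp only [List.mem_map, List.mem_filter, List.mem_range, decide_eq_true_eq]
  constructor
  · rintro ⟨i, ⟨hi, hd⟩, ha⟩
    have h1 : i + 1 < l.length := by omega
    exact ⟨i, h1, by rw [← getD_eq l i (by omega)]; exact ha,
      by rw [← getD_eq l i (by omega), ← getD_eq l (i+1) h1]; exact hd⟩
  · rintro ⟨i, h1, ha, hd⟩
    exact ⟨i, ⟨by omega, by rw [getD_eq l i (by omega), getD_eq l (i+1) h1]; exact hd⟩,
      by rw [getD_eq l i (by omega)]; exact ha⟩

lemma dv_nil_sorted (l : List ℕ) (h : dv l = []) (i : ℕ) (hi : i + 1 < l.length) :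
    l[i] ≤ l[i+1] := by
  by_contra hc
  have : l[i] ∈ dv l := (mem_dv l _).mpr ⟨i, hi, rfl, by omega⟩
  simp [h] at this

lemma le_foldr_max (L : List ℕ) (a : ℕ) (h : a ∈ L) : a ≤ L.foldr max 0 := by
  induction L with
  | nil => simp at h
  | cons b L ih =>
    rcases List.mem_cons.mp h with rfl | h
    · exact le_max_left _ _
    · exact le_trans (ih h) (le_max_right _ _)

lemma foldr_max_mem (L : List ℕ) (h : L ≠ []) (h0 : L.foldr max 0 ≠ 0) :
    L.foldr max 0 ∈ L := by
  induction L with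
  | nil => simp at h
  | cons b L ih =>
    simp only [List.foldr_cons] at h0 ⊢
    rcases max_cases b (L.foldr max 0) with ⟨he, _⟩ | ⟨he, _⟩
    · rw [he]; exact List.mem_cons_self
    · rw [he] at h0 ⊢
      rcases L with _ | _
      · simp at h0
      · exact List.mem_cons_of_mem _ (ih (by simp) h0)

lemma descent_le_x (l : List ℕ) (j : ℕ) (hj : j + 1 < l.length) (hd : l[j+1] < l[j]) :
    l[j] ≤ (dv l).foldr max 0 :=
  le_foldr_max _ _ ((mem_dv l _).mpr ⟨j, hj, rfl, hd⟩)

lemma descent_at_p (l : List ℕ) (hnd : l.Nodup) (h : dv l ≠ []) :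
    ∃ p x : ℕ, l.idxOf ((dv l).foldr max 0) = p ∧ (dv l).foldr max 0 = x ∧
      (∃ hp : p + 1 < l.length, l[p] = x ∧ l[p+1] < x) ∧
      ∀ j (hj : j + 1 < l.length), l[j+1] < l[j] → l[j] ≤ x := by
  obtain ⟨a, ha⟩ := List.exists_mem_of_ne_nil _ h
  obtain ⟨i, hi, hia, hid⟩ := (mem_dv l a).mp ha
  have hax : a ≤ (dv l).foldr max 0 := le_foldr_max _ _ ha
  have hx0 : (dv l).foldr max 0 ≠ 0 := by omega
  have hxmem : (dv l).foldr max 0 ∈ dv l := foldr_max_mem _ h hx0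
  obtain ⟨i', hi', hia', hid'⟩ := (mem_dv l _).mp hxmem
  have hpi : l.idxOf ((dv l).foldr max 0) = i' := by
    rw [← hia']; exact List.Nodup.idxOf_getElem hnd i' (by omega)
  exact ⟨i', (dv l).foldr max 0, hpi, rfl, ⟨by omega, hia', by rw [hia'] at hid'; exact hid'⟩,
    fun j hj hd => descent_le_x l j hj hd⟩

lemma sorted_drop_adj (l : List ℕ) (i : ℕ) (hsort : List.Pairwise (· < ·) (l.drop i))
    (a b : ℕ) (hia : i ≤ a) (hab : a < b) (hb : b < l.length) :
    l[a]'(by omega) < l[b] := by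
  have h1 : a - i < (l.drop i).length := by simp; omega
  have h2 : b - i < (l.drop i).length := by simp; omega
  have := List.pairwise_iff_getElem.mp hsort (a - i) (b - i) h1 h2 (by omega)
  simp only [List.getElem_drop] at this
  have ea : i + (a - i) = a := by omega
  have eb : i + (b - i) = b := by omega
  simp_rw [ea, eb] at this
  exact this

lemma entry_drop (l : List ℕ) (s k : ℕ) (hk : 1 ≤ k) :
    entry (l.drop s) k = entry l (s + k) := by
  unfold entry
  by_cases h : k ≤ (l.drop s).length
  · have hlen : s + k ≤ l.length := by simp at h; omega
    rw [dif_pos ⟨hk, h⟩, dif_pos ⟨by omega, hlen⟩]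
    have e : s + (k - 1) = s + k - 1 := by omega
    simp [List.get_eq_getElem, List.getElem_drop, e]
  · rw [dif_neg (by tauto), dif_neg (by simp at h; omega)]

lemma headD_eq_getElem (l : List ℕ) (h : 0 < l.length) : l.headD 0 = l[0] := by
  cases l with
  | nil => simp at h
  | cons a t => rfl

set_option maxHeartbeats 2000000 in

lemma main_gen : ∀ (N : ℕ) (l : List ℕ), l.length ≤ N → l.Nodup → ∀ y : ℕ,
    RixPt l y →
    (y = beta1 l → IsValley l y) ∧ (y ≠ beta1 l → IsDblAsc l y) := by
  intro N
  induction N with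
  | zero =>
    intro l hlen _ y hy
    obtain ⟨⟨t, ht, _, hyt⟩, _⟩ := hy
    have h1 := List.IsSuffix.length_le ht
    have : t = [] := List.eq_nil_of_length_eq_zero (by omega)
    subst this
    simp at hyt
  | succ N ih =>
    intro l hlen hnd y hy
    obtain ⟨hex, hble⟩ := hy
    obtain ⟨i, hi, hiy, hsort⟩ := rixpt_pos l y hex
    have hnext : (y : WithTop ℕ) < entry l (i + 1 + 1) := by
      by_cases h : i + 1 < l.length
      · rw [entry_succ l (i+1) h]
        exact_mod_cast hiy ▸ sorted_drop_adj l i hsort i (i+1) le_rfl (by omega) h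
      · rw [entry_of_gt l _ (by omega)]
        exact WithTop.coe_lt_top y
    have hcur : entry l (i+1) = (y : WithTop ℕ) := by rw [entry_succ l i hi, hiy]
    by_cases hdv : dv l = []
    · -- case 1 : l is increasing, beta = l
      have hb : beta1 l = l[0]'(by omega) := by
        unfold beta1
        rw [rixFact_of_dv_nil l hdv, headD_eq_getElem l (by omega)]
      have hchain : List.IsChain (· < ·) l := by
        rw [List.isChain_iff_getElem]
        intro j hj
        exact lt_of_le_of_ne (dv_nil_sorted l hdv j (by omega))
          (fun he => by have := hnd.getElem_inj_iff.mp he; omega)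
      have hpa := List.pairwise_iff_getElem.mp (List.isChain_iff_pairwise.mp hchain)
      constructor
      · intro hyb
        have hi0 : i = 0 := by
          by_contra h0
          have := hpa 0 i (by omega) hi (by omega)
          rw [hiy, hyb, hb] at this
          exact lt_irrefl _ this
        subst hi0
        exact ⟨1, le_rfl, by omega, hcur, by
          rw [show (1:ℕ) - 1 = 0 from rfl, entry_zero, hcur]
          exact WithTop.coe_lt_top y, hcur ▸ hnext⟩
      · intro hyb
        have hi0 : i ≠ 0 := by
          intro h0; subst h0; exact hyb (by rw [← hiy, hb])
        obtain ⟨j, rfl⟩ : ∃ j, i = j + 1 := ⟨i-1, by omega⟩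
        refine ⟨j+1+1, by omega, by omega, hcur, ?_, hcur ▸ hnext⟩
        show entry l (j+1) < entry l (j+1+1)
        rw [entry_succ l j (by omega), hcur]
        exact_mod_cast hiy ▸ hpa j (j+1) (by omega) hi (by omega)
    · obtain ⟨p, x, hpeq, hxeq, ⟨hp1, hpx, hpd⟩, hmax⟩ := descent_at_p l hnd hdv
      by_cases hp0 : p = 0
      · -- case 2 : beta = l, head = x is max descent
        subst hp0
        have hb : beta1 l = x := by
          unfold beta1
          rw [rixFact_of_p_zero l hdv (by rw [hpeq]), headD_eq_getElem l (by omega)]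
          exact hpx
        constructor
        · intro hyb
          exfalso
          have hix : i = 0 :=
            (@List.Nodup.getElem_inj_iff ℕ l hnd i hi 0 (by omega)).mp
              (by rw [hiy, hyb, hb, ← hpx])
          have hsort' : List.Pairwise (· < ·) (l.drop 0) := hix ▸ hsort
          have h2 := sorted_drop_adj l 0 hsort' 0 1 (by omega) (by omega) hp1
          have hpd' : l[1] < x := by simpa using hpd
          omega
        · intro hyb
          have hyx : x < y := lt_of_le_of_ne (hb ▸ hble) (fun he => hyb (by rw [hb, he]))
          have hi0 : i ≠ 0 := by
            intro h0; subst h0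
            rw [hpx] at hiy; omega
          obtain ⟨j, rfl⟩ : ∃ j, i = j + 1 := ⟨i-1, by omega⟩
          refine ⟨j+1+1, by omega, by omega, hcur, ?_, hcur ▸ hnext⟩
          show entry l (j+1) < entry l (j+1+1)
          rw [entry_succ l j (by omega), hcur]
          have hprev : l[j]'(by omega) < y := by
            rcases lt_trichotomy (l[j]'(by omega)) y with h | h | h
            · exact h
            · exact absurd
                ((@List.Nodup.getElem_inj_iff ℕ l hnd j (by omega) (j+1) hi).mp
                  (by rw [hiy]; exact h)) (by omega)
            · exfalso
              have hdes : l[j+1] < l[j]'(by omega) := by rw [hiy]; exact h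
              have h2 := hmax j (by omega) hdes
              omega
          exact_mod_cast hprev
      · -- case 3 : recursive
        have hip : p + 1 ≤ i := by
          by_contra hc
          have := sorted_drop_adj l i hsort p (p+1) (by omega) (by omega) hp1
          omega
        have hbeq : beta1 l = beta1 (l.drop (p+1)) := by
          unfold beta1
          rw [rixFact_rec l hdv (by rw [hpeq]; exact hp0), hpeq]
        have hdropeq : (l.drop (p+1)).drop (i - (p+1)) = l.drop i := by
          rw [List.drop_drop]
          congr 1; omega
        have hrix' : RixPt (l.drop (p+1)) y := by
          refine ⟨⟨l.drop i, ?_, hsort, ?_⟩, hbeq ▸ hble⟩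
          · rw [← hdropeq]; exact List.drop_suffix _ _
          · have h0 : 0 < (l.drop i).length := by simp; omega
            have he : (l.drop i)[0] = y := by simp [List.getElem_drop, hiy]
            rw [← he]; exact List.getElem_mem _
        obtain ⟨hv', hd'⟩ := ih (l.drop (p+1)) (by simp; omega)
          (List.Nodup.sublist (List.drop_sublist _ _) hnd) y hrix'
        have hl'len : (l.drop (p+1)).length = l.length - (p+1) := by simp
        constructor
        · intro hyb
          obtain ⟨j, hj1, hjle, hjy, hjprev, hjnext⟩ := hv' (hbeq ▸ hyb)
          rw [hl'len] at hjle
          refine ⟨p+1+j, by omega, by omega, ?_, ?_, ?_⟩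
          · rw [← entry_drop l (p+1) j hj1]; exact hjy
          · rw [← entry_drop l (p+1) j hj1]
            by_cases hj2 : 2 ≤ j
            · rw [show p+1+j-1 = p+1+(j-1) by omega,
                ← entry_drop l (p+1) (j-1) (by omega)]
              exact hjprev
            · have hj : j = 1 := by omega
              subst hj
              rw [show p+1+1-1 = p+1 by omega, entry_succ l p (by omega), hpx]
              have h0 : 0 < (l.drop (p+1)).length := by omega
              rw [entry_succ _ 0 h0]
              have he : (l.drop (p+1))[0]'h0 = l[p+1] := by simp [List.getElem_drop]
              rw [he]
              exact_mod_cast hpd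
          · rw [show p+1+j+1 = p+1+(j+1) by omega,
              ← entry_drop l (p+1) (j+1) (by omega), ← entry_drop l (p+1) j hj1]
            exact hjnext
        · intro hyb
          obtain ⟨j, hj1, hjle, hjy, hjprev, hjnext⟩ := hd' (fun he => hyb (hbeq ▸ he))
          rw [hl'len] at hjle
          have hj2 : 2 ≤ j := by
            by_contra hc
            have hj : j = 1 := by omega
            subst hj
            rw [show (1:ℕ) - 1 = 0 from rfl, entry_zero, hjy] at hjprev
            exact not_top_lt hjprev
          refine ⟨p+1+j, by omega, by omega, ?_, ?_, ?_⟩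
          · rw [← entry_drop l (p+1) j hj1]; exact hjy
          · rw [show p+1+j-1 = p+1+(j-1) by omega,
              ← entry_drop l (p+1) (j-1) (by omega), ← entry_drop l (p+1) j hj1]
            exact hjprev
          · rw [show p+1+j+1 = p+1+(j+1) by omega,
              ← entry_drop l (p+1) (j+1) (by omega), ← entry_drop l (p+1) j hj1]
            exact hjnext

/-- If `y` is a rixed point of `π`, then `y` is a valley of `π` if `y = β₁(π)`,
and a double ascent of `π` otherwise. -/
theorem stmt_14 (n : ℕ) (l : List ℕ) (hl : l.Perm (List.range' 1 n))
    (y : ℕ) (hy : RixPt l y) :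
    (y = beta1 l → IsValley l y) ∧ (y ≠ beta1 l → IsDblAsc l y) := by
  have hnd : l.Nodup := hl.nodup_iff.mpr (List.nodup_range' (s := 1) (n := n))
  exact main_gen l.length l le_rfl hnd y hy

end DMTCS
end
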